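/- arXiv:2405.04209 — 12 statements merged into one kernel-verified Lean document; each statement's English description precedes it below -/
import Mathlib

section
/- Let n be a finite-dimensional 2-step nilpotent Lie algebra over a field F with characteristic different from 2. Then there exists a local derivation of n which is not a derivation. -/
/-- Every finite-dimensional 2-step nilpotent Lie algebra over a field of
characteristic different from 2 admits a local derivation which is not a derivation. -/
theorem stmt_0 (F : Type*) [Field F] (hchar : ringChar F ≠ 2)
    (L : Type*) [LieRing L] [LieAlgebra F L] [Module.Finite F L]
    (htwo_step : LieModule.lowerCentralSeries F L L 2 = ⊥)
    (hnonab : LieModule.lowerCentralSeries F L L 1 ≠ ⊥) :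
    ∃ Δ : L →ₗ[F] L,
      (∀ x : L, ∃ D : LieDerivation F L L, Δ x = D x) ∧
      ¬ (∀ x y : L, Δ ⁅x, y⁆ = ⁅Δ x, y⁆ + ⁅x, Δ y⁆) := by
  classical
  set I : LieSubmodule F L L := LieModule.lowerCentralSeries F L L 1 with hI
  -- every bracket lies in I
  have hbr : ∀ x y : L, ⁅x, y⁆ ∈ I := by
    intro x y
    have h1 : LieModule.lowerCentralSeries F L L 1
        = ⁅(⊤ : LieIdeal F L), LieModule.lowerCentralSeries F L L 0⁆ :=
      LieModule.lowerCentralSeries_succ F L L 0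
    rw [hI, h1, LieModule.lowerCentralSeries_zero]
    exact LieSubmodule.lie_mem_lie (LieSubmodule.mem_top _) (LieSubmodule.mem_top _)
  -- elements of I are central
  have hcent : ∀ z : L, z ∈ I → ∀ y : L, ⁅y, z⁆ = 0 := by
    intro z hz y
    have h2 : LieModule.lowerCentralSeries F L L 2
        = ⁅(⊤ : LieIdeal F L), LieModule.lowerCentralSeries F L L 1⁆ :=
      LieModule.lowerCentralSeries_succ F L L 1
    have : ⁅y, z⁆ ∈ LieModule.lowerCentralSeries F L L 2 := by
      rw [h2]
      exact LieSubmodule.lie_mem_lie (LieSubmodule.mem_top _) hz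
    rw [htwo_step] at this
    exact this
  have hcent' : ∀ z : L, z ∈ I → ∀ y : L, ⁅z, y⁆ = 0 := by
    intro z hz y
    have := hcent z hz y
    rw [← lie_skew, this, neg_zero]
  -- the derived submodule as a plain submodule, and a complement
  set S : Submodule F L := (I : Submodule F L) with hS
  have hmemS : ∀ z : L, z ∈ I ↔ z ∈ S := fun z => Iff.rfl
  obtain ⟨q, hq⟩ := S.exists_isCompl
  -- the projection onto S along q
  set π : L →ₗ[F] L := S.subtype ∘ₗ S.projectionOnto q hq with hπ
  have hπmem : ∀ v : L, π v ∈ S := fun v => (S.projectionOnto q hq v).2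
  have hπS : ∀ z : L, z ∈ S → π z = z := by
    intro z hz
    have := Submodule.projectionOnto_apply_left hq ⟨z, hz⟩
    simp only [hπ, LinearMap.comp_apply, Submodule.subtype_apply]
    rw [this]
  have hqa : ∀ x : L, x - π x ∈ q := by
    intro x
    have h2 := Submodule.projection_add_projection_eq_self hq x
    have h' : x - π x = (q.projectionOnto S hq.symm x : L) := by
      simp only [hπ, LinearMap.comp_apply, Submodule.subtype_apply]
      rw [sub_eq_iff_eq_add, add_comm]
      exact h2.symm
    rw [h']
    exact (q.projectionOnto S hq.symm x).2
  have hπcentL : ∀ v y : L, ⁅y, π v⁆ = 0 := fun v y => hcent _ ((hmemS _).2 (hπmem v)) y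
  have hπcentR : ∀ v y : L, ⁅π v, y⁆ = 0 := fun v y => hcent' _ ((hmemS _).2 (hπmem v)) y
  have hπbr : ∀ x y : L, π ⁅x, y⁆ = ⁅x, y⁆ := fun x y => hπS _ ((hmemS _).1 (hbr x y))
  refine ⟨π, ?_, ?_⟩
  · -- π is a local derivation
    intro x
    by_cases ha : x - π x = 0
    · -- x ∈ S : use (1/2) • (id + π)
      have hx : π x = x := (sub_eq_zero.mp ha).symm
      have two_ne : (2 : F) ≠ 0 := Ring.two_ne_zero hchar
      set D2lin : L →ₗ[F] L := LinearMap.id + π with hD2lin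
      have hD2 : ∀ a b : L, D2lin ⁅a, b⁆ = ⁅a, D2lin b⁆ - ⁅b, D2lin a⁆ := by
        intro a b
        simp only [hD2lin, LinearMap.add_apply, LinearMap.id_apply, lie_add, hπbr, hπcentL]
        rw [← lie_skew a b]
        abel
      set D2 : LieDerivation F L L := ⟨D2lin, hD2⟩ with hD2def
      refine ⟨(2 : F)⁻¹ • D2, ?_⟩
      have hD2x : D2 x = x + π x := rfl
      rw [LieDerivation.smul_apply, hD2x, hx]
      rw [← two_smul F x, smul_smul, inv_mul_cancel₀ two_ne, one_smul]
    · -- x ∉ S (up to S-part) : use a rank one map into S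
      set a : L := x - π x with hadef
      have haq : a ∈ q := hqa x
      -- build a functional g with g a = 1 and g vanishing on S
      have haq' : (⟨a, haq⟩ : q) ≠ 0 := by
        intro h
        exact ha (by simpa using congrArg Subtype.val h)
      obtain ⟨r, hr⟩ := (Submodule.span F {(⟨a, haq⟩ : q)}).exists_isCompl
      set g : L →ₗ[F] F :=
        ((LinearEquiv.coord F q ⟨a, haq⟩ haq' : (F ∙ (⟨a, haq⟩ : q)) →ₗ[F] F) ∘ₗ
          (Submodule.span F {(⟨a, haq⟩ : q)}).projectionOnto r hr) ∘ₗ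
          q.projectionOnto S hq.symm with hg
      have hgS : ∀ z : L, z ∈ S → g z = 0 := by
        intro z hz
        simp only [hg, LinearMap.comp_apply]
        rw [Submodule.projectionOnto_apply_of_mem_right hq.symm hz]
        simp
      have hga : g a = 1 := by
        simp only [hg, LinearMap.comp_apply]
        rw [Submodule.projectionOnto_apply_left hq.symm ⟨a, haq⟩]
        have hproj : ((Submodule.span F {(⟨a, haq⟩ : q)}).projectionOnto r hr)
            ⟨a, haq⟩ = ⟨⟨a, haq⟩, Submodule.mem_span_singleton_self _⟩ :=
          Submodule.projectionOnto_apply_left hr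
            ⟨⟨a, haq⟩, Submodule.mem_span_singleton_self _⟩
        rw [hproj]
        exact LinearEquiv.coord_self F q ⟨a, haq⟩ haq'
      -- the rank one derivation  v ↦ g v • π x
      have hD : ∀ u v : L, (LinearMap.smulRight g (π x)) ⁅u, v⁆
          = ⁅u, (LinearMap.smulRight g (π x)) v⁆ - ⁅v, (LinearMap.smulRight g (π x)) u⁆ := by
        intro u v
        simp only [LinearMap.smulRight_apply, lie_smul, hπcentL, smul_zero, sub_zero,
          hgS _ ((hmemS _).1 (hbr u v)), zero_smul]
      refine ⟨⟨LinearMap.smulRight g (π x), hD⟩, ?_⟩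
      have : (⟨LinearMap.smulRight g (π x), hD⟩ : LieDerivation F L L) x = g x • π x := rfl
      rw [this]
      have hgx : g x = 1 := by
        have hxsplit : x = a + π x := by rw [hadef]; abel
        rw [hxsplit, map_add, hga, hgS _ (hπmem x), add_zero]
      rw [hgx, one_smul]
  · -- π is not a derivation
    intro hder
    -- some bracket is nonzero
    have : ∃ x y : L, ⁅x, y⁆ ≠ 0 := by
      by_contra hall
      push_neg at hall
      apply hnonab
      show LieModule.lowerCentralSeries F L L 1 = ⊥
      have h1 : LieModule.lowerCentralSeries F L L 1
          = ⁅(⊤ : LieIdeal F L), LieModule.lowerCentralSeries F L L 0⁆ :=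
        LieModule.lowerCentralSeries_succ F L L 0
      rw [h1, LieModule.lowerCentralSeries_zero, LieSubmodule.lie_eq_bot_iff]
      intro x _ m _
      exact hall x m
    obtain ⟨x, y, hxy⟩ := this
    have := hder x y
    rw [hπbr x y, hπcentR x y, hπcentL y x, add_zero] at this
    exact hxy this
end

section
/- Let H be the complex (2n+1)-dimensional Heisenberg Lie algebra with basis {e_{-n},…,e_{-1},e_0,e_1,…,e_n} (n ≥ 1) and nonzero brackets [e_{-i},e_i] = e_0 = -[e_i,e_{-i}] for i = 1,…,n (all other basis brackets zero). Then the linear map Δ defined on the basis by Δ(e_0) = e_0 and Δ(e_i) = 0 for i ≠ 0 is a local derivation of H but is not a derivation of H. -/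
/-- On the complex `(2n+1)`-dimensional Heisenberg Lie algebra with basis
`{e_{-n},…,e_0,…,e_n}` and nonzero brackets `[e_{-i}, e_i] = e_0` for `1 ≤ i ≤ n`,
the linear map `Δ` with `Δ(e_0) = e_0` and `Δ(e_i) = 0` for `i ≠ 0` is a local
derivation but not a derivation. -/
theorem stmt_1 (n : ℕ) (hn : 1 ≤ n)
    (H : Type*) [LieRing H] [LieAlgebra ℂ H]
    (e : Module.Basis {i : ℤ // i.natAbs ≤ n} ℂ H)
    (hbr : ∀ i : ℤ, ∀ h1 : 1 ≤ i, ∀ h2 : i ≤ (n : ℤ),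
      ⁅e ⟨-i, by omega⟩, e ⟨i, by omega⟩⁆ = e ⟨0, by omega⟩)
    (hzero : ∀ i j : {i : ℤ // i.natAbs ≤ n}, (i : ℤ) + (j : ℤ) ≠ 0 → ⁅e i, e j⁆ = 0)
    (Δ : H →ₗ[ℂ] H)
    (hΔ0 : Δ (e ⟨0, by omega⟩) = e ⟨0, by omega⟩)
    (hΔ : ∀ i : {i : ℤ // i.natAbs ≤ n}, (i : ℤ) ≠ 0 → Δ (e i) = 0) :
    (∀ x : H, ∃ D : LieDerivation ℂ H H, Δ x = D x) ∧
    ¬ (∀ x y : H, Δ ⁅x, y⁆ = ⁅Δ x, y⁆ + ⁅x, Δ y⁆) := by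
  have h0 : (0 : ℤ).natAbs ≤ n := by omega
  set i0 : {i : ℤ // i.natAbs ≤ n} := ⟨0, h0⟩ with hi0
  -- normalized bracket lemmas
  have L1 : ∀ i j : {i : ℤ // i.natAbs ≤ n}, (i : ℤ) + (j : ℤ) = 0 → (i : ℤ) < 0 →
      ⁅e i, e j⁆ = e i0 := by
    rintro ⟨iv, hiv⟩ ⟨jv, hjv⟩ hij hlt
    simp only at hij hlt
    obtain rfl : iv = -jv := by omega
    exact hbr jv (by omega) (by omega)
  have L2 : ∀ i j : {i : ℤ // i.natAbs ≤ n}, (i : ℤ) + (j : ℤ) = 0 → 0 < (i : ℤ) →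
      ⁅e i, e j⁆ = -(e i0) := by
    intro i j hij hlt
    rw [← lie_skew, L1 j i (by omega) (by omega)]
  -- coordinate form of Δ
  have hΔeq : ∀ x : H, Δ x = (e.coord i0 x) • e i0 := by
    have hh : Δ = (LinearMap.toSpanSingleton ℂ H (e i0)).comp (e.coord i0) := by
      apply e.ext
      intro i
      by_cases hi : (i : ℤ) = 0
      · have : i = i0 := Subtype.ext hi
        subst this
        simp [hΔ0, LinearMap.toSpanSingleton_apply]
      · have hne : ¬ i = i0 := fun h => hi (by rw [h])
        simp [hΔ i hi, Module.Basis.coord_apply, Module.Basis.repr_self, Finsupp.single_apply, hne,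
          LinearMap.toSpanSingleton_apply]
    intro x; rw [hh]; simp [LinearMap.toSpanSingleton_apply]
  -- the outer derivation (identity on nonneg part, zero on negative part)
  set f : H →ₗ[ℂ] H :=
    e.constr ℂ (fun i : {i : ℤ // i.natAbs ≤ n} => if 0 ≤ (i : ℤ) then e i else 0) with hfdef
  have hfb : ∀ i : {i : ℤ // i.natAbs ≤ n}, f (e i) = if 0 ≤ (i : ℤ) then e i else 0 :=
    fun i => e.constr_basis ℂ _ i
  have key : ∀ i j : {i : ℤ // i.natAbs ≤ n},
      f ⁅e i, e j⁆ = ⁅f (e i), e j⁆ + ⁅e i, f (e j)⁆ := by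
    intro i j
    have hfb0 : f (e i0) = e i0 := by rw [hfb]; exact if_pos le_rfl
    by_cases hij : (i : ℤ) + (j : ℤ) = 0
    · rcases lt_trichotomy (i : ℤ) 0 with hi | hi | hi
      · rw [L1 i j hij hi, hfb0, hfb i, hfb j, if_neg (by omega), if_pos (by omega),
          L1 i j hij hi]
        simp
      · have hii : i = i0 := Subtype.ext hi
        have hji : j = i0 := Subtype.ext (by show (j:ℤ) = 0; omega)
        subst hii; subst hji
        simp [hfb0]
      · rw [L2 i j hij hi, map_neg, hfb0, hfb i, hfb j, if_pos (by omega), if_neg (by omega),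
          L2 i j hij hi]
        simp
    · rw [hzero i j hij, hfb, hfb]
      split_ifs <;> simp [hzero i j hij]
  have hf : ∀ x y : H, f ⁅x, y⁆ = ⁅f x, y⁆ + ⁅x, f y⁆ := by
    set B : H →ₗ[ℂ] H →ₗ[ℂ] H := LinearMap.mk₂ ℂ (fun x y : H => ⁅x, y⁆) add_lie smul_lie lie_add lie_smul with hB
    have hBap : ∀ x y : H, B x y = ⁅x, y⁆ := fun x y => rfl
    have hmain : B.compr₂ f = B.comp f + B.compl₂ f := by
      apply e.ext; intro i; apply e.ext; intro j
      simp only [LinearMap.compr₂_apply, LinearMap.comp_apply, LinearMap.add_apply,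
        LinearMap.compl₂_apply, hBap]
      exact key i j
    intro x y
    have := LinearMap.congr_fun (LinearMap.congr_fun hmain x) y
    simpa only [LinearMap.compr₂_apply, LinearMap.comp_apply, LinearMap.add_apply,
      LinearMap.compl₂_apply, hBap] using this
  set Dp : LieDerivation ℂ H H :=
    { toLinearMap := f
      leibniz' := fun a b => by
        rw [hf a b, ← lie_skew b (f a)]; abel } with hDp
  constructor
  · intro x
    by_cases hx : ∀ j : {i : ℤ // i.natAbs ≤ n}, (j : ℤ) ≠ 0 → e.coord j x = 0
    · -- x is a multiple of e 0
      have hxe : x = (e.coord i0 x) • e i0 := by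
        apply e.repr.injective
        ext j
        by_cases hj : (j : ℤ) = 0
        · have : j = i0 := Subtype.ext hj
          subst this
          simp [Module.Basis.coord_apply]
        · have hc := hx j hj
          rw [Module.Basis.coord_apply] at hc
          have hne : ¬ i0 = j := fun h => hj (by rw [← h])
          simp [hc, Module.Basis.repr_self, Finsupp.single_apply, hne]
      refine ⟨Dp, ?_⟩
      rw [hΔeq x]
      conv_rhs => rw [hxe]
      show _ = f _
      rw [map_smul, hfb]
      simp [hi0]
    · push_neg at hx
      obtain ⟨j, hj0, hcj⟩ := hx
      have hmj : (-(j : ℤ)).natAbs ≤ n := by have := j.2; omega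
      set mj : {i : ℤ // i.natAbs ≤ n} := ⟨-(j : ℤ), hmj⟩ with hmjdef
      set s : ℂ := if 0 ≤ (j : ℤ) then 1 else -1 with hs
      have hsne : s ≠ 0 := by rw [hs]; split_ifs <;> norm_num
      have hbrk : ∀ y : H, ⁅e mj, y⁆ = s • (e.coord j y) • e i0 := by
        have hh : LieAlgebra.ad ℂ H (e mj) =
            s • ((LinearMap.toSpanSingleton ℂ H (e i0)).comp (e.coord j)) := by
          apply e.ext; intro i
          simp only [LieAlgebra.ad_apply, LinearMap.smul_apply, LinearMap.comp_apply,
            Module.Basis.coord_apply, Module.Basis.repr_self, LinearMap.toSpanSingleton_apply]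
          by_cases hij : i = j
          · subst hij
            rw [Finsupp.single_apply, if_pos rfl]
            have hmjv : (mj : ℤ) = -(i : ℤ) := rfl
            rcases lt_or_ge (i : ℤ) 0 with hi | hi
            · rw [L2 mj i (by omega) (by omega)]
              rw [hs, if_neg (by omega)]
              simp
            · have hi' : 0 < (i : ℤ) := by omega
              rw [L1 mj i (by omega) (by omega)]
              rw [hs, if_pos hi]
              simp
          · rw [Finsupp.single_apply, if_neg hij]
            rw [hzero mj i (by
              show -(j : ℤ) + (i : ℤ) ≠ 0
              intro hc
              exact hij (Subtype.ext (by omega)))]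
            simp
        intro y
        have := LinearMap.congr_fun hh y
        simpa using this
      set c : ℂ := (e.coord i0 x) / (s * e.coord j x) with hc
      refine ⟨LieDerivation.ad ℂ H (c • e mj), ?_⟩
      have had : (LieDerivation.ad ℂ H (c • e mj)) x = ⁅c • e mj, x⁆ := by
        simp [LieDerivation.coe_ad_apply_eq_ad_apply]
      rw [had, smul_lie, hbrk x, hΔeq x, hc]
      rw [smul_smul, smul_smul]
      congr 1
      rw [div_mul_eq_mul_div, div_mul_eq_mul_div, eq_div_iff (by exact mul_ne_zero hsne hcj)]
      ring
  · intro hcon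
    have h1n : (1 : ℤ).natAbs ≤ n := by omega
    have hm1n : (-1 : ℤ).natAbs ≤ n := by omega
    have hb : ⁅e ⟨-1, hm1n⟩, e ⟨1, h1n⟩⁆ = e i0 :=
      L1 ⟨-1, hm1n⟩ ⟨1, h1n⟩ (by norm_num) (by norm_num)
    have hthis := hcon (e ⟨-1, hm1n⟩) (e ⟨1, h1n⟩)
    rw [hΔ ⟨-1, hm1n⟩ (by norm_num), hΔ ⟨1, h1n⟩ (by norm_num), hb, hΔ0] at hthis
    simp at hthis
    exact e.ne_zero i0 hthis
end

section
/- Let n be a finite-dimensional nilpotent Lie algebra over a field F with nilindex p ≥ 4 (equivalently, n^3 ≠ 0 and n^p = 0 for some p). Suppose there exists a derivation D of n such that D(n^2) ⊆ Z(n) and D does not vanish identically on n^2. Then n admits a local derivation which is not a derivation. -/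
/-- If a finite-dimensional nilpotent Lie algebra `n` of nilindex `p ≥ 4` admits a
derivation `D` with `D(n²) ⊆ Z(n)` not vanishing identically on `n²`, then `n`
admits a local derivation which is not a derivation. -/
theorem stmt_3 (F : Type*) [Field F]
    (L : Type*) [LieRing L] [LieAlgebra F L] [Module.Finite F L]
    (p : ℕ) (hp : 4 ≤ p)
    (hnil : LieModule.lowerCentralSeries F L L (p - 1) = ⊥)
    (hnil' : LieModule.lowerCentralSeries F L L (p - 2) ≠ ⊥)
    (D : LieDerivation F L L)
    (hD : ∀ x ∈ LieModule.lowerCentralSeries F L L 1, D x ∈ LieAlgebra.center F L)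
    (hD' : ∃ x ∈ LieModule.lowerCentralSeries F L L 1, D x ≠ 0) :
    ∃ Δ : L →ₗ[F] L,
      (∀ x : L, ∃ d : LieDerivation F L L, Δ x = d x) ∧
      ¬ (∀ x y : L, Δ ⁅x, y⁆ = ⁅Δ x, y⁆ + ⁅x, Δ y⁆) := by
  classical
  clear hp hnil hnil'
  set N := LieModule.lowerCentralSeries F L L 1 with hN
  set S : Submodule F L := N.toSubmodule with hSdef
  -- all brackets lie in S
  have hbr : ∀ x y : L, ⁅x, y⁆ ∈ S := by
    intro x y
    show ⁅x, y⁆ ∈ N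
    rw [hN, LieModule.lowerCentralSeries_succ]
    exact LieSubmodule.lie_mem_lie (LieSubmodule.mem_top x) (LieSubmodule.mem_top y)
  obtain ⟨S', hc⟩ := S.exists_isCompl
  set P : L →ₗ[F] L := S.subtype ∘ₗ S.projectionOnto S' hc with hP
  have hPmem : ∀ x : L, P x ∈ N := fun x => (S.projectionOnto S' hc x).2
  have hPS : ∀ x ∈ S, P x = x := by
    intro x hx
    have := Submodule.linearProjOfIsCompl_apply_left hc ⟨x, hx⟩
    simp only [hP, LinearMap.coe_comp, Function.comp_apply, Submodule.coe_subtype]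
    rw [this]
  set Δ : L →ₗ[F] L := D.toLinearMap ∘ₗ P with hΔ
  have hΔapp : ∀ x : L, Δ x = D (P x) := fun x => rfl
  have hcen : ∀ x : L, Δ x ∈ LieModule.maxTrivSubmodule F L L := by
    intro x
    exact hD _ (hPmem x)
  have hcen1 : ∀ x y : L, ⁅y, Δ x⁆ = 0 := by
    intro x y
    exact (LieModule.mem_maxTrivSubmodule F L L (Δ x)).1 (hcen x) y
  have hcen2 : ∀ x y : L, ⁅Δ x, y⁆ = 0 := by
    intro x y
    rw [← lie_skew, hcen1 x y, neg_zero]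
  refine ⟨Δ, fun x => ?_, fun H => ?_⟩
  · by_cases hx : x ∈ S
    · exact ⟨D, by rw [hΔapp, hPS x hx]⟩
    · obtain ⟨f, hf0, hfbot⟩ := S.exists_dual_map_eq_bot_of_notMem hx inferInstance
      have hfS : ∀ y ∈ S, f y = 0 := by
        intro y hy
        have : f y ∈ S.map f := Submodule.mem_map_of_mem hy
        rw [hfbot] at this
        exact this
      refine ⟨⟨LinearMap.smulRight f ((f x)⁻¹ • Δ x), ?_⟩, ?_⟩
      · intro a b
        simp only [LinearMap.smulRight_apply]
        rw [hfS _ (hbr a b), zero_smul]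
        simp [lie_smul, hcen1 x]
      · show Δ x = f x • ((f x)⁻¹ • Δ x)
        rw [smul_smul, mul_inv_cancel₀ hf0, one_smul]
  · obtain ⟨a, haN, haD⟩ := hD'
    apply haD
    have hDbr : ∀ x y : L, D ⁅x, y⁆ = 0 := by
      intro x y
      have h1 := H x y
      rw [hcen2, hcen1, add_zero] at h1
      rw [← hPS _ (hbr x y), ← hΔapp, h1]
    have hker : S ≤ LinearMap.ker D.toLinearMap := by
      have hspan : S = Submodule.span F
          {m : L | ∃ (x : (⊤ : LieIdeal F L)) (n : (⊤ : LieSubmodule F L L)),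
            ⁅(x : L), (n : L)⁆ = m} := by
        rw [hSdef, hN, LieModule.lowerCentralSeries_succ, LieModule.lowerCentralSeries_zero,
          LieSubmodule.lieIdeal_oper_eq_linear_span]
      rw [hspan, Submodule.span_le]
      rintro _ ⟨x, n, rfl⟩
      exact hDbr (x : L) (n : L)
    exact hker haN
end

section
/- Let n be a finite-dimensional nilpotent Lie algebra over a field F with nilindex 4, i.e., n^4 = 0 and n^3 ≠ 0. Then n admits a local derivation which is not a derivation. -/
/-- Every finite-dimensional nilpotent Lie algebra of nilindex 4 admits a local
derivation which is not a derivation. -/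
theorem stmt_4 (F : Type*) [Field F]
    (L : Type*) [LieRing L] [LieAlgebra F L] [Module.Finite F L]
    (hnil : LieModule.lowerCentralSeries F L L 3 = ⊥)
    (hnil' : LieModule.lowerCentralSeries F L L 2 ≠ ⊥) :
    ∃ Δ : L →ₗ[F] L,
      (∀ x : L, ∃ D : LieDerivation F L L, Δ x = D x) ∧
      ¬ (∀ x y : L, Δ ⁅x, y⁆ = ⁅Δ x, y⁆ + ⁅x, Δ y⁆) := by
  classical
  -- elements of the third term of the lower central series are central
  have central : ∀ y t : L, t ∈ LieModule.lowerCentralSeries F L L 2 → ⁅y, t⁆ = 0 := by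
    intro y t ht
    have h3 : ⁅y, t⁆ ∈ LieModule.lowerCentralSeries F L L 3 := by
      rw [show (3 : ℕ) = 2 + 1 from rfl, LieModule.lowerCentralSeries_succ]
      exact LieSubmodule.lie_mem_lie (LieSubmodule.mem_top y) ht
    rw [hnil] at h3
    simpa using h3
  -- pick u, w₀ with w₀ ∈ [L,L] and ⁅u, w₀⁆ ≠ 0
  obtain ⟨u, w₀, hw₀, huw⟩ :
      ∃ u : L, ∃ w : L, w ∈ LieModule.lowerCentralSeries F L L 1 ∧ ⁅u, w⁆ ≠ 0 := by
    by_contra h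
    push_neg at h
    apply hnil'
    rw [show (2 : ℕ) = 1 + 1 from rfl, LieModule.lowerCentralSeries_succ, ← le_bot_iff,
      LieSubmodule.lie_le_iff]
    intro x _ m hm
    rw [LieSubmodule.mem_bot]
    exact h x m hm
  -- a linear projection P : L → L onto [L,L]
  obtain ⟨C, hC⟩ :=
    Submodule.exists_isCompl (LieSubmodule.toSubmodule (LieModule.lowerCentralSeries F L L 1))
  let P : L →ₗ[F] L :=
    (LieSubmodule.toSubmodule (LieModule.lowerCentralSeries F L L 1)).subtype ∘ₗ
      Submodule.linearProjOfIsCompl _ C hC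
  have hPmem : ∀ x : L, P x ∈ LieModule.lowerCentralSeries F L L 1 :=
    fun x => (Submodule.linearProjOfIsCompl _ C hC x).2
  have hPid : ∀ x : L, x ∈ LieModule.lowerCentralSeries F L L 1 → P x = x := by
    intro x hx
    have h1 := Submodule.linearProjOfIsCompl_apply_left hC
      (⟨x, hx⟩ : LieSubmodule.toSubmodule (LieModule.lowerCentralSeries F L L 1))
    show ((Submodule.projectionOnto _ C hC x : _)  : L) = x
    rw [h1]
  -- the local derivation
  let Δ : L →ₗ[F] L := (LieAlgebra.ad F L u) ∘ₗ P
  have hΔapp : ∀ x : L, Δ x = ⁅u, P x⁆ := by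
    intro x
    show LieAlgebra.ad F L u (P x) = ⁅u, P x⁆
    rw [LieAlgebra.ad_apply]
  have hΔmem : ∀ x : L, Δ x ∈ LieModule.lowerCentralSeries F L L 2 := by
    intro x
    rw [hΔapp, show (2 : ℕ) = 1 + 1 from rfl, LieModule.lowerCentralSeries_succ]
    exact LieSubmodule.lie_mem_lie (LieSubmodule.mem_top u) (hPmem x)
  refine ⟨Δ, ?_, ?_⟩
  · -- Δ is a local derivation
    intro x
    by_cases hx : x ∈ LieModule.lowerCentralSeries F L L 1
    · exact ⟨LieDerivation.ad F L u, by
        rw [hΔapp, hPid x hx]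
        simp [LieDerivation.coe_ad_apply_eq_ad_apply]⟩
    · -- x ∉ [L,L] : use a rank-one derivation with central values, vanishing on [L,L]
      have hxq : (Submodule.Quotient.mk x :
          L ⧸ LieSubmodule.toSubmodule (LieModule.lowerCentralSeries F L L 1)) ≠ 0 := by
        simpa [Submodule.Quotient.mk_eq_zero] using hx
      have hne : ¬ ∀ φ : Module.Dual F
          (L ⧸ LieSubmodule.toSubmodule (LieModule.lowerCentralSeries F L L 1)),
          φ (Submodule.Quotient.mk x) = 0 := by
        rw [Module.forall_dual_apply_eq_zero_iff]
        exact hxq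
      push_neg at hne
      obtain ⟨φ, hφ⟩ := hne
      set f : L →ₗ[F] F :=
        (φ (Submodule.Quotient.mk x))⁻¹ •
          (φ ∘ₗ (LieSubmodule.toSubmodule (LieModule.lowerCentralSeries F L L 1)).mkQ) with hf
      have hfN1 : ∀ w ∈ LieModule.lowerCentralSeries F L L 1, f w = 0 := by
        intro w hw
        simp only [hf, LinearMap.smul_apply, LinearMap.coe_comp, Function.comp_apply,
          Submodule.mkQ_apply, smul_eq_mul]
        rw [(Submodule.Quotient.mk_eq_zero _).mpr hw]
        simp
      have hfx : f x = 1 := by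
        simp only [hf, LinearMap.smul_apply, LinearMap.coe_comp, Function.comp_apply,
          Submodule.mkQ_apply, smul_eq_mul]
        exact inv_mul_cancel₀ hφ
      refine ⟨{ toLinearMap := f.smulRight (Δ x), leibniz' := ?_ }, ?_⟩
      · intro a b
        have h1 : f ⁅a, b⁆ = 0 := by
          apply hfN1
          rw [show (1 : ℕ) = 0 + 1 from rfl, LieModule.lowerCentralSeries_succ]
          exact LieSubmodule.lie_mem_lie (LieSubmodule.mem_top a) (LieSubmodule.mem_top b)
        simp only [LinearMap.smulRight_apply, h1, zero_smul, lie_smul,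
          central a (Δ x) (hΔmem x), central b (Δ x) (hΔmem x), smul_zero, sub_zero, sub_self]
      · show Δ x = f x • Δ x
        rw [hfx, one_smul]
  · -- Δ is not a derivation
    intro H
    have hz : ∀ a b : L, Δ ⁅a, b⁆ = 0 := by
      intro a b
      rw [H a b, central a (Δ b) (hΔmem b), ← lie_skew, central b (Δ a) (hΔmem a)]
      simp
    have hvan : ∀ w ∈ LieModule.lowerCentralSeries F L L 1, Δ w = 0 := by
      intro w hw
      have hw' : w ∈ LieSubmodule.toSubmodule (LieModule.lowerCentralSeries F L L 1) := hw
      rw [show (1 : ℕ) = 0 + 1 from rfl, LieModule.lowerCentralSeries_succ,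
        LieSubmodule.lieIdeal_oper_eq_linear_span'] at hw'
      refine Submodule.span_induction ?_ ?_ ?_ ?_ hw'
      · rintro m ⟨a, -, b, -, rfl⟩
        exact hz a b
      · simp
      · intro m n _ _ hm hn; rw [map_add, hm, hn, add_zero]
      · intro t m _ hm; rw [map_smul, hm, smul_zero]
    apply huw
    have := hvan w₀ hw₀
    rw [hΔapp, hPid w₀ hw₀] at this
    exact this
end

section
/- Let n be a finite-dimensional nilpotent Lie algebra over a field F with n^p = 0 for some p ≥ 5. If [n^{p-3}, n^2] ≠ 0, then n admits a local derivation which is not a derivation. -/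
private lemma lcs_bracket_mem (F : Type*) [Field F]
    (L : Type*) [LieRing L] [LieAlgebra F L] :
    ∀ (i j : ℕ) (x m : L), x ∈ LieModule.lowerCentralSeries F L L i →
      m ∈ LieModule.lowerCentralSeries F L L j →
      ⁅x, m⁆ ∈ LieModule.lowerCentralSeries F L L (i + j + 1) := by
  have htop : ∀ (j : ℕ) (y m : L), m ∈ LieModule.lowerCentralSeries F L L j →
      ⁅y, m⁆ ∈ LieModule.lowerCentralSeries F L L (j + 1) := by
    intro j y m hm
    rw [LieModule.lowerCentralSeries_succ]
    exact LieSubmodule.lie_mem_lie (LieSubmodule.mem_top y) hm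
  intro i
  induction i with
  | zero =>
    intro j x m _ hm
    simpa using htop j x m hm
  | succ i ih =>
    intro j x m hx hm
    rw [LieModule.lowerCentralSeries_succ] at hx
    have hx' : x ∈ Submodule.span F
        {z : L | ∃ y ∈ (⊤ : LieIdeal F L),
          ∃ n ∈ LieModule.lowerCentralSeries F L L i, ⁅y, n⁆ = z} := by
      rw [← LieSubmodule.lieIdeal_oper_eq_linear_span']
      exact hx
    have key : i + 1 + j + 1 = i + (j + 1) + 1 := by omega
    refine Submodule.span_induction ?_ ?_ ?_ ?_ hx'
    · rintro z ⟨y, -, n, hn, rfl⟩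
      rw [lie_lie]
      refine sub_mem ?_ ?_
      · have h1 := ih j n m hn hm
        have h2 := htop (i + j + 1) y _ h1
        have : i + j + 1 + 1 = i + 1 + j + 1 := by omega
        rwa [this] at h2
      · have h1 := htop j y m hm
        have h2 := ih (j + 1) n _ hn h1
        rwa [← key] at h2
    · simp
    · intro z₁ z₂ _ _ h1 h2
      rw [add_lie]
      exact add_mem h1 h2
    · intro t z _ h1
      rw [smul_lie]
      exact SMulMemClass.smul_mem t h1

/-- Let `n` be a finite-dimensional nilpotent Lie algebra with `nᵖ = 0` for some
`p ≥ 5`. If `[n^{p-3}, n²] ≠ 0`, then `n` admits a local derivation which is not a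
derivation. -/
theorem stmt_5 (F : Type*) [Field F]
    (L : Type*) [LieRing L] [LieAlgebra F L] [Module.Finite F L]
    (p : ℕ) (hp : 5 ≤ p)
    (hnil : LieModule.lowerCentralSeries F L L (p - 1) = ⊥)
    (hbr : ⁅LieModule.lowerCentralSeries F L L (p - 4),
           LieModule.lowerCentralSeries F L L 1⁆ ≠ (⊥ : LieSubmodule F L L)) :
    ∃ Δ : L →ₗ[F] L,
      (∀ x : L, ∃ D : LieDerivation F L L, Δ x = D x) ∧
      ¬ (∀ x y : L, Δ ⁅x, y⁆ = ⁅Δ x, y⁆ + ⁅x, Δ y⁆) := by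
  classical
  -- extract a, b with nonzero bracket
  obtain ⟨a, ha, b, hb, hab⟩ : ∃ a ∈ LieModule.lowerCentralSeries F L L (p - 4),
      ∃ b ∈ LieModule.lowerCentralSeries F L L 1, ⁅a, b⁆ ≠ 0 := by
    by_contra h
    push_neg at h
    exact hbr ((LieSubmodule.lie_eq_bot_iff _ _).mpr h)
  set N : LieSubmodule F L L := LieModule.lowerCentralSeries F L L (p - 2) with hNdef
  -- N is central
  have hcent : ∀ u ∈ N, ∀ x : L, ⁅x, u⁆ = 0 := by
    intro u hu x
    have h1 : ⁅x, u⁆ ∈ ⁅(⊤ : LieIdeal F L), N⁆ :=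
      LieSubmodule.lie_mem_lie (LieSubmodule.mem_top x) hu
    rw [hNdef, ← LieModule.lowerCentralSeries_succ] at h1
    have h2 : p - 2 + 1 = p - 1 := by omega
    rw [h2, hnil] at h1
    exact (LieSubmodule.mem_bot _).mp h1
  -- brackets of a with the derived algebra land in N
  have hmemN : ∀ z ∈ LieModule.lowerCentralSeries F L L 1, ⁅a, z⁆ ∈ N := by
    intro z hz
    have h1 := lcs_bracket_mem F L (p - 4) 1 a z ha hz
    have h2 : p - 4 + 1 + 1 = p - 2 := by omega
    rwa [h2] at h1
  -- brackets lie in the derived algebra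
  have hbrk : ∀ x y : L, ⁅x, y⁆ ∈ LieModule.lowerCentralSeries F L L 1 := by
    intro x y
    have : (1 : ℕ) = 0 + 1 := rfl
    rw [this, LieModule.lowerCentralSeries_succ, LieModule.lowerCentralSeries_zero]
    exact LieSubmodule.lie_mem_lie (LieSubmodule.mem_top x) (LieSubmodule.mem_top y)
  -- projection onto N
  obtain ⟨C, hC⟩ := Submodule.exists_isCompl (LieSubmodule.toSubmodule N)
  set pr : L →ₗ[F] (LieSubmodule.toSubmodule N) :=
    Submodule.projectionOnto _ C hC with hprdef
  set P : L →ₗ[F] L := (LieSubmodule.toSubmodule N).subtype.comp pr with hPdef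
  have hPmem : ∀ x : L, P x ∈ N := by
    intro x
    exact (LieSubmodule.mem_toSubmodule _).mp (pr x).2
  have hPid : ∀ u : L, u ∈ N → P u = u := by
    intro u hu
    have hu' : u ∈ (LieSubmodule.toSubmodule N) := (LieSubmodule.mem_toSubmodule _).mpr hu
    have h3 := Submodule.linearProjOfIsCompl_apply_left hC ⟨u, hu'⟩
    simp only [hPdef, LinearMap.comp_apply, hprdef]
    rw [h3]
    rfl
  set Δ : L →ₗ[F] L := P.comp (LieAlgebra.ad F L a) with hΔdef
  have hΔN : ∀ x : L, Δ x ∈ N := fun x => hPmem _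
  have hΔval : ∀ z : L, ⁅a, z⁆ ∈ N → Δ z = ⁅a, z⁆ := by
    intro z hz
    have : Δ z = P ⁅a, z⁆ := by
      simp only [hΔdef, LinearMap.comp_apply, LieAlgebra.ad_apply]
    rw [this, hPid _ hz]
  -- central-valued functional derivations
  have hder : ∀ (g : L →ₗ[F] F) (v : L),
      (∀ z ∈ LieModule.lowerCentralSeries F L L 1, g z = 0) → v ∈ N →
      ∃ D : LieDerivation F L L, ∀ x : L, D x = g x • v := by
    intro g v hg hv
    refine ⟨⟨g.smulRight v, ?_⟩, fun x => rfl⟩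
    intro x y
    have h1 : g ⁅x, y⁆ = 0 := hg _ (hbrk x y)
    simp [LinearMap.smulRight_apply, h1, lie_smul, hcent v hv]
  -- functionals vanishing on the derived algebra
  have hfun : ∀ x : L, x ∉ LieModule.lowerCentralSeries F L L 1 →
      ∃ g : L →ₗ[F] F, g x = 1 ∧
        ∀ z ∈ LieModule.lowerCentralSeries F L L 1, g z = 0 := by
    intro x hx
    set S : Submodule F L :=
      LieSubmodule.toSubmodule (LieModule.lowerCentralSeries F L L 1) with hSdef
    have hx0 : S.mkQ x ≠ 0 := by
      intro h0
      have hmem : x ∈ LinearMap.ker S.mkQ := h0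
      rw [Submodule.ker_mkQ] at hmem
      exact hx ((LieSubmodule.mem_toSubmodule _).mp hmem)
    obtain ⟨φ, hφ⟩ : ∃ φ : Module.Dual F (L ⧸ S), φ (S.mkQ x) ≠ 0 := by
      by_contra h
      push_neg at h
      exact hx0 ((Module.forall_dual_apply_eq_zero_iff F _).mp h)
    refine ⟨(φ (S.mkQ x))⁻¹ • (φ.comp S.mkQ), ?_, ?_⟩
    · simp only [LinearMap.smul_apply, LinearMap.comp_apply, smul_eq_mul]
      exact inv_mul_cancel₀ (by simpa using hφ)
    · intro z hz
      have : S.mkQ z = 0 := by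
        have hmem : z ∈ LinearMap.ker S.mkQ := by
          rw [Submodule.ker_mkQ]
          exact (LieSubmodule.mem_toSubmodule _).mpr hz
        exact hmem
      simp [this]
  refine ⟨Δ, ?_, ?_⟩
  · -- local derivation property
    intro x
    by_cases hx : x ∈ LieModule.lowerCentralSeries F L L 1
    · refine ⟨LieDerivation.ad F L a, ?_⟩
      rw [hΔval x (hmemN x hx)]
      simp
    · obtain ⟨g, hg1, hg0⟩ := hfun x hx
      obtain ⟨D, hD⟩ := hder g (Δ x) hg0 (hΔN x)
      exact ⟨D, by rw [hD, hg1, one_smul]⟩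
  · -- not a derivation
    intro hcontra
    have hzero : ∀ x y : L, ⁅a, ⁅x, y⁆⁆ = 0 := by
      intro x y
      have h1 := hcontra x y
      have e0 : Δ ⁅x, y⁆ = ⁅a, ⁅x, y⁆⁆ := hΔval _ (hmemN _ (hbrk x y))
      have e1 : ⁅Δ x, y⁆ = 0 := by
        rw [← lie_skew, hcent _ (hΔN x) y, neg_zero]
      have e2 : ⁅x, Δ y⁆ = 0 := hcent _ (hΔN y) x
      rw [e0, e1, e2, add_zero] at h1
      exact h1
    -- conclude ⁅a, b⁆ = 0, contradiction
    have hb1 : b ∈ ⁅(⊤ : LieIdeal F L), (⊤ : LieSubmodule F L L)⁆ := by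
      have : (1 : ℕ) = 0 + 1 := rfl
      rw [this, LieModule.lowerCentralSeries_succ, LieModule.lowerCentralSeries_zero] at hb
      exact hb
    have hb2 : b ∈ Submodule.span F
        {m : L | ∃ x ∈ (⊤ : LieIdeal F L), ∃ n ∈ (⊤ : LieSubmodule F L L), ⁅x, n⁆ = m} := by
      rw [← LieSubmodule.lieIdeal_oper_eq_linear_span']
      exact (LieSubmodule.mem_toSubmodule _).mpr hb1
    have hker : Submodule.span F
        {m : L | ∃ x ∈ (⊤ : LieIdeal F L), ∃ n ∈ (⊤ : LieSubmodule F L L), ⁅x, n⁆ = m}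
        ≤ LinearMap.ker (LieAlgebra.ad F L a) := by
      rw [Submodule.span_le]
      rintro m ⟨x, -, n, -, rfl⟩
      rw [SetLike.mem_coe, LinearMap.mem_ker, LieAlgebra.ad_apply]
      exact hzero x n
    have : ⁅a, b⁆ = 0 := by
      have := hker hb2
      rw [LinearMap.mem_ker, LieAlgebra.ad_apply] at this
      exact this
    exact hab this
end

section
/- Let n ≥ 3 and let w be the complex n-dimensional truncated Witt Lie algebra with basis {e_1,…,e_n} and brackets [e_i,e_j] = (j-i) e_{i+j} for i + j ≤ n and [e_i,e_j] = 0 for i + j > n. Then the linear map d defined on the basis by d(e_2) = e_{n-1}, d(e_3) = (n-2) e_n, d(e_i) = 0 for i ≠ 2,3 is a derivation of w, and the linear map Δ defined by Δ(e_3) = (n-2) e_n, Δ(e_i) = 0 for i ≠ 3 is a local derivation of w which is not a derivation. -/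
lemma aux_ext' {n : ℕ} {W : Type*} [LieRing W] [LieAlgebra ℂ W]
    (e : Module.Basis (Fin n) ℂ W) (f : W →ₗ[ℂ] W)
    (h : ∀ i j : Fin n, f ⁅e i, e j⁆ = ⁅f (e i), e j⁆ + ⁅e i, f (e j)⁆) :
    ∀ x y : W, f ⁅x, y⁆ = ⁅f x, y⁆ + ⁅x, f y⁆ := by
  have hB : (LinearMap.mk₂ ℂ (fun x y => f ⁅x, y⁆)
      (fun a b y => by simp only [add_lie, map_add])
      (fun c a y => by simp only [smul_lie, map_smul])
      (fun x a b => by simp only [lie_add, map_add])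
      (fun c x a => by simp only [lie_smul, map_smul]))
      = (LinearMap.mk₂ ℂ (fun x y => ⁅f x, y⁆ + ⁅x, f y⁆)
      (fun a b y => by simp only [map_add, add_lie, lie_add]; abel)
      (fun c a y => by simp only [map_smul, smul_lie, lie_smul, smul_add])
      (fun x a b => by simp only [map_add, add_lie, lie_add]; abel)
      (fun c x a => by simp only [map_smul, smul_lie, lie_smul, smul_add])) :=
    e.ext fun i => e.ext fun j => by simpa using h i j
  intro x y
  simpa using LinearMap.congr_fun (LinearMap.congr_fun hB x) y

lemma aux_single' {n : ℕ} {W : Type*} [AddCommGroup W] [Module ℂ W]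
    (e : Module.Basis (Fin n) ℂ W) (f : W →ₗ[ℂ] W) (k : Fin n) (v : W)
    (hk : f (e k) = v) (h0 : ∀ i, i ≠ k → f (e i) = 0) (x : W) :
    f x = e.repr x k • v := by
  conv_lhs => rw [← e.sum_repr x]
  rw [map_sum, Finset.sum_eq_single k]
  · rw [map_smul, hk]
  · intro i _ hi; rw [map_smul, h0 i hi, smul_zero]
  · intro h; exact absurd (Finset.mem_univ k) h

/-- Build a `LieDerivation` from a linear map satisfying the Leibniz rule. -/
def mkDer {W : Type*} [LieRing W] [LieAlgebra ℂ W] (f : W →ₗ[ℂ] W)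
    (h : ∀ x y : W, f ⁅x, y⁆ = ⁅f x, y⁆ + ⁅x, f y⁆) : LieDerivation ℂ W W :=
  { f with leibniz' := fun a b => by rw [h a b, ← lie_skew (f a) b]; abel }

set_option maxHeartbeats 4000000 in
/-- On the complex `n`-dimensional truncated Witt algebra (`n ≥ 3`) with basis
`e_1, …, e_n` and brackets `[e_i, e_j] = (j - i) e_{i+j}` for `i + j ≤ n` (zero
otherwise), the map `d` with `d(e_2) = e_{n-1}`, `d(e_3) = (n-2) e_n`, `d(e_i) = 0`
otherwise is a derivation, and the map `Δ` with `Δ(e_3) = (n-2) e_n`, `Δ(e_i) = 0`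
otherwise is a local derivation which is not a derivation.
Here the basis is indexed by `Fin n`, with `e_i` corresponding to index `i - 1`. -/
theorem stmt_6 (n : ℕ) (hn : 3 ≤ n)
    (W : Type*) [LieRing W] [LieAlgebra ℂ W]
    (e : Module.Basis (Fin n) ℂ W)
    (hbr : ∀ i j : Fin n, ∀ h : (i : ℕ) + (j : ℕ) + 2 ≤ n,
      ⁅e i, e j⁆ = (((j : ℕ) : ℂ) - ((i : ℕ) : ℂ)) • e ⟨(i : ℕ) + (j : ℕ) + 1, by omega⟩)
    (hbr0 : ∀ i j : Fin n, n < (i : ℕ) + (j : ℕ) + 2 → ⁅e i, e j⁆ = 0)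
    (d : W →ₗ[ℂ] W)
    (hd2 : d (e ⟨1, by omega⟩) = e ⟨n - 2, by omega⟩)
    (hd3 : d (e ⟨2, by omega⟩) = ((n : ℂ) - 2) • e ⟨n - 1, by omega⟩)
    (hd0 : ∀ i : Fin n, (i : ℕ) ≠ 1 → (i : ℕ) ≠ 2 → d (e i) = 0)
    (Δ : W →ₗ[ℂ] W)
    (hΔ3 : Δ (e ⟨2, by omega⟩) = ((n : ℂ) - 2) • e ⟨n - 1, by omega⟩)
    (hΔ0 : ∀ i : Fin n, (i : ℕ) ≠ 2 → Δ (e i) = 0) :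
    (∀ x y : W, d ⁅x, y⁆ = ⁅d x, y⁆ + ⁅x, d y⁆) ∧
    (∀ x : W, ∃ D : LieDerivation ℂ W W, Δ x = D x) ∧
    ¬ (∀ x y : W, Δ ⁅x, y⁆ = ⁅Δ x, y⁆ + ⁅x, Δ y⁆) := by
  set N1 : Fin n := ⟨n - 1, by omega⟩ with hN1
  set N2 : Fin n := ⟨n - 2, by omega⟩ with hN2
  -- generalized bracket formula
  have hbr' : ∀ (i j k : Fin n), (k : ℕ) = (i : ℕ) + (j : ℕ) + 1 →
      ⁅e i, e j⁆ = (((j : ℕ) : ℂ) - ((i : ℕ) : ℂ)) • e k := by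
    intro i j k hk
    have hkn := k.2
    have h : (i : ℕ) + (j : ℕ) + 2 ≤ n := by omega
    rw [hbr i j h]
    have hk2 : (⟨(i : ℕ) + (j : ℕ) + 1, by omega⟩ : Fin n) = k :=
      Fin.ext (show (i : ℕ) + (j : ℕ) + 1 = (k : ℕ) by omega)
    exact congrArg (fun z => (((j : ℕ) : ℂ) - ((i : ℕ) : ℂ)) • e z) hk2
  have hzN1 : ∀ j : Fin n, ⁅e N1, e j⁆ = 0 := fun j =>
    hbr0 N1 j (by show n < (n-1) + (j:ℕ) + 2; omega)
  have hzN1' : ∀ i : Fin n, ⁅e i, e N1⁆ = 0 := fun i =>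
    hbr0 i N1 (by show n < (i:ℕ) + (n-1) + 2; omega)
  have hzN2 : ∀ j : Fin n, 1 ≤ (j : ℕ) → ⁅e N2, e j⁆ = 0 := fun j hj =>
    hbr0 N2 j (by show n < (n-2) + (j:ℕ) + 2; omega)
  have hzN2' : ∀ i : Fin n, 1 ≤ (i : ℕ) → ⁅e i, e N2⁆ = 0 := fun i hi =>
    hbr0 i N2 (by show n < (i:ℕ) + (n-2) + 2; omega)
  have hd1' : ∀ i : Fin n, (i : ℕ) = 1 → d (e i) = e N2 := fun i h => by
    rw [show i = ⟨1, by omega⟩ from Fin.ext h]; exact hd2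
  have hd2' : ∀ i : Fin n, (i : ℕ) = 2 → d (e i) = ((n : ℂ) - 2) • e N1 := fun i h => by
    rw [show i = ⟨2, by omega⟩ from Fin.ext h]; exact hd3
  have hc2 : (((n - 2 : ℕ)) : ℂ) = (n : ℂ) - 2 := by
    push_cast [Nat.cast_sub (by omega : 2 ≤ n)]; ring
  -- zero lemmas for RHS terms
  have hside1 : ∀ p q : Fin n, ¬((p : ℕ) = 1 ∧ (q : ℕ) = 0) → ⁅d (e p), e q⁆ = 0 := by
    intro p q hpq
    by_cases hA : (p : ℕ) = 1
    · rw [hd1' p hA]; exact hzN2 q (by omega)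
    · by_cases hB : (p : ℕ) = 2
      · rw [hd2' p hB, smul_lie, hzN1 q, smul_zero]
      · rw [hd0 p hA hB, zero_lie]
  have hside2 : ∀ p q : Fin n, ¬((p : ℕ) = 0 ∧ (q : ℕ) = 1) → ⁅e p, d (e q)⁆ = 0 := by
    intro p q hpq
    by_cases hA : (q : ℕ) = 1
    · rw [hd1' q hA]; exact hzN2' p (by omega)
    · by_cases hB : (q : ℕ) = 2
      · rw [hd2' q hB, lie_smul, hzN1' p, smul_zero]
      · rw [hd0 q hA hB, lie_zero]
  -- the key basis identity for d
  have key : ∀ i j : Fin n, d ⁅e i, e j⁆ = ⁅d (e i), e j⁆ + ⁅e i, d (e j)⁆ := by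
    intro i j
    by_cases hab : (i : ℕ) + (j : ℕ) + 2 ≤ n
    · by_cases h01 : (i : ℕ) = 0 ∧ (j : ℕ) = 1
      · obtain ⟨ha, hb⟩ := h01
        rw [hbr' i j ⟨2, by omega⟩ (by show (2:ℕ) = (i:ℕ) + (j:ℕ) + 1; omega), map_smul,
          hd2' ⟨2, by omega⟩ rfl, hd0 i (by omega) (by omega), zero_lie,
          hd1' j hb, hbr' i N2 N1 (by show (n-1:ℕ) = (i:ℕ) + (n-2) + 1; omega)]
        simp only [ha, hb, hN2, hc2]
        push_cast
        module
      · by_cases h10 : (i : ℕ) = 1 ∧ (j : ℕ) = 0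
        · obtain ⟨ha, hb⟩ := h10
          rw [hbr' i j ⟨2, by omega⟩ (by show (2:ℕ) = (i:ℕ) + (j:ℕ) + 1; omega), map_smul,
            hd2' ⟨2, by omega⟩ rfl, hd0 j (by omega) (by omega), lie_zero,
            hd1' i ha, hbr' N2 j N1 (by show (n-1:ℕ) = (n-2) + (j:ℕ) + 1; omega)]
          simp only [ha, hb, hN2, hc2]
          push_cast
          module
        · rw [hside1 i j (by tauto), hside2 i j (by tauto), add_zero]
          rw [hbr i j hab, map_smul]
          by_cases h00 : (i : ℕ) = 0 ∧ (j : ℕ) = 0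
          · simp [h00.1, h00.2]
          · rw [hd0 ⟨(i : ℕ) + (j : ℕ) + 1, by omega⟩ (by show (i:ℕ)+(j:ℕ)+1 ≠ 1; omega) (by show (i:ℕ)+(j:ℕ)+1 ≠ 2; omega),
              smul_zero]
    · rw [hbr0 i j (by omega), map_zero,
        hside1 i j (by omega), hside2 i j (by omega), add_zero]
  have hder := aux_ext' e d key
  refine ⟨hder, ?_, ?_⟩
  · -- local derivation
    intro x
    have hΔx : Δ x = e.repr x ⟨2, by omega⟩ • (((n : ℂ) - 2) • e N1) :=
      aux_single' e Δ ⟨2, by omega⟩ _ hΔ3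
        (fun i hi => hΔ0 i (fun h => hi (Fin.ext h))) x
    by_cases hc1 : e.repr x ⟨1, by omega⟩ = 0
    · refine ⟨mkDer d hder, ?_⟩
      have hdiff : (d - Δ) x = e.repr x ⟨1, by omega⟩ • e N2 := by
        refine aux_single' e (d - Δ) ⟨1, by omega⟩ (e N2) ?_ ?_ x
        · simp [hd2, hΔ0 ⟨1, by omega⟩ (by show (1:ℕ) ≠ 2; omega)]
        · intro i hi
          by_cases h2 : (i : ℕ) = 2
          · rw [show i = ⟨2, by omega⟩ from Fin.ext h2]
            simp [hd3, hΔ3]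
          · have h1 : (i : ℕ) ≠ 1 := fun h => hi (Fin.ext h)
            simp [hd0 i h1 h2, hΔ0 i h2]
      rw [hc1, zero_smul] at hdiff
      have hdx : d x - Δ x = 0 := by simpa using hdiff
      show Δ x = d x
      exact (sub_eq_zero.mp hdx).symm
    · -- use the derivation e⟨1⟩ ↦ μ • e N1
      set μ : ℂ := ((n : ℂ) - 2) * e.repr x ⟨2, by omega⟩ / e.repr x ⟨1, by omega⟩ with hμ
      set D1 : W →ₗ[ℂ] W := e.constr ℂ (fun k => if (k : ℕ) = 1 then μ • e N1 else 0) with hD1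
      have hD1v : ∀ i : Fin n, D1 (e i) = if (i : ℕ) = 1 then μ • e N1 else 0 :=
        fun i => e.constr_basis ℂ _ i
      have keyD : ∀ i j : Fin n, D1 ⁅e i, e j⁆ = ⁅D1 (e i), e j⁆ + ⁅e i, D1 (e j)⁆ := by
        intro i j
        have h1 : ⁅D1 (e i), e j⁆ = 0 := by
          rw [hD1v i]
          by_cases h : (i : ℕ) = 1
          · rw [if_pos h, smul_lie, hzN1 j, smul_zero]
          · rw [if_neg h, zero_lie]
        have h2 : ⁅e i, D1 (e j)⁆ = 0 := by
          rw [hD1v j]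
          by_cases h : (j : ℕ) = 1
          · rw [if_pos h, lie_smul, hzN1' i, smul_zero]
          · rw [if_neg h, lie_zero]
        rw [h1, h2, add_zero]
        by_cases hab : (i : ℕ) + (j : ℕ) + 2 ≤ n
        · rw [hbr i j hab, map_smul]
          by_cases h00 : (i : ℕ) = 0 ∧ (j : ℕ) = 0
          · simp [h00.1, h00.2]
          · rw [hD1v ⟨(i : ℕ) + (j : ℕ) + 1, by omega⟩, if_neg (by show ¬((i:ℕ)+(j:ℕ)+1 = 1); omega), smul_zero]
        · rw [hbr0 i j (by omega), map_zero]
      refine ⟨mkDer D1 (aux_ext' e D1 keyD), ?_⟩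
      have hD1x : D1 x = e.repr x ⟨1, by omega⟩ • (μ • e N1) :=
        aux_single' e D1 ⟨1, by omega⟩ _ (by rw [hD1v ⟨1, by omega⟩, if_pos rfl])
          (fun i hi => by
            rw [hD1v, if_neg (fun h => hi (Fin.ext h))]) x
      have : Δ x = D1 x := by
        rw [hΔx, hD1x, smul_smul, smul_smul, hμ]
        congr 1
        field_simp
      exact this
  · -- Δ is not a derivation
    intro H
    have h01 := H (e ⟨0, by omega⟩) (e ⟨1, by omega⟩)
    rw [hbr' ⟨0, by omega⟩ ⟨1, by omega⟩ ⟨2, by omega⟩ rfl,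
      hΔ0 ⟨0, by omega⟩ (by show (0:ℕ) ≠ 2; omega), hΔ0 ⟨1, by omega⟩ (by show (1:ℕ) ≠ 2; omega),
      zero_lie, lie_zero, add_zero, map_smul, hΔ3] at h01
    simp only [Nat.cast_one, Nat.cast_zero, sub_zero, one_smul] at h01
    have hne : ((n : ℂ) - 2) ≠ 0 := by
      intro h
      have h2 : (n : ℂ) = 2 := sub_eq_zero.mp h
      have h3 : (n : ℕ) = 2 := by exact_mod_cast h2
      omega
    have := smul_eq_zero.mp h01
    rcases this with h | h
    · exact hne h
    · exact e.ne_zero N1 h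
end

section
/- Let n be a finite-dimensional non-abelian nilpotent Lie algebra over a field F of characteristic different from 2 which is generated (as a Lie algebra) by two elements. Then n admits a local derivation which is not a derivation. -/
section Aux

variable (F : Type*) [Field F]

/-- Separating functional: if `v ∉ U` there is a functional vanishing on `U` with value 1 at `v`. -/
theorem stmt7_sep {V : Type*} [AddCommGroup V] [Module F V] (U : Submodule F V) (v : V)
    (hv : v ∉ U) : ∃ f : V →ₗ[F] F, f v = 1 ∧ ∀ u ∈ U, f u = 0 := by
  have hvb : U.mkQ v ≠ 0 := by
    simpa [Submodule.mkQ_apply, Submodule.Quotient.mk_eq_zero] using hv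
  obtain ⟨W, hW⟩ := (Submodule.span F {U.mkQ v}).exists_isCompl
  refine ⟨(LinearEquiv.coord F (V ⧸ U) (U.mkQ v) hvb).toLinearMap ∘ₗ
      (Submodule.linearProjOfIsCompl _ W hW) ∘ₗ U.mkQ, ?_, ?_⟩
  · have h1 : Submodule.linearProjOfIsCompl _ W hW (U.mkQ v)
        = ⟨U.mkQ v, Submodule.mem_span_singleton_self _⟩ :=
      Submodule.linearProjOfIsCompl_apply_left hW ⟨U.mkQ v, Submodule.mem_span_singleton_self _⟩
    simp only [LinearMap.coe_comp, Function.comp_apply, LinearEquiv.coe_coe]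
    rw [h1, LinearEquiv.coord_self]
  · intro u hu
    have : U.mkQ u = 0 := by simpa [Submodule.Quotient.mk_eq_zero] using hu
    simp [this]

variable {L : Type*} [LieRing L] [LieAlgebra F L]

/-- Elements of the first term `C²` of the lower central series lie in any submodule containing
all brackets. -/
theorem stmt7_N1_le (P : Submodule F L) (h : ∀ u v : L, ⁅u, v⁆ ∈ P) :
    ∀ m ∈ LieModule.lowerCentralSeries F L L 1, m ∈ P := by
  intro m hm
  have h1 : LieModule.lowerCentralSeries F L L 1
      = ⁅(⊤ : LieIdeal F L), (⊤ : LieSubmodule F L L)⁆ := by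
    rw [show (1 : ℕ) = 0 + 1 from rfl, LieModule.lowerCentralSeries_succ,
      LieModule.lowerCentralSeries_zero]
  rw [h1] at hm
  have hm' : m ∈ Submodule.span F
      {m : L | ∃ x ∈ (⊤ : LieIdeal F L), ∃ n ∈ (⊤ : LieSubmodule F L L), ⁅x, n⁆ = m} := by
    rw [← LieSubmodule.lieIdeal_oper_eq_linear_span']
    exact hm
  refine Submodule.span_le.mpr ?_ hm'
  rintro _ ⟨u, -, n, -, rfl⟩
  exact h u n

theorem stmt7_mem_N_succ {j : ℕ} (u : L) {n : L}
    (hn : n ∈ LieModule.lowerCentralSeries F L L j) :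
    ⁅u, n⁆ ∈ LieModule.lowerCentralSeries F L L (j + 1) := by
  rw [LieModule.lowerCentralSeries_succ]
  exact LieSubmodule.lie_mem_lie (LieSubmodule.mem_top _) hn

end Aux

/-- Every finite-dimensional non-abelian nilpotent Lie algebra over a field of
characteristic different from 2 which is generated by two elements admits a local
derivation which is not a derivation. -/
theorem stmt_7 (F : Type*) [Field F] (hchar : ringChar F ≠ 2)
    (L : Type*) [LieRing L] [LieAlgebra F L] [Module.Finite F L]
    (hnilp : ∃ k : ℕ, LieModule.lowerCentralSeries F L L k = ⊥)
    (hnonab : ∃ x y : L, ⁅x, y⁆ ≠ 0)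
    (hgen : ∃ x y : L, LieSubalgebra.lieSpan F L {x, y} = ⊤) :
    ∃ Δ : L →ₗ[F] L,
      (∀ x : L, ∃ D : LieDerivation F L L, Δ x = D x) ∧
      ¬ (∀ x y : L, Δ ⁅x, y⁆ = ⁅Δ x, y⁆ + ⁅x, Δ y⁆) := by
  classical
  obtain ⟨x, y, hxy⟩ := hgen
  obtain ⟨a₀, b₀, hab₀⟩ := hnonab
  -- Membership wrappers
  have hmemco : ∀ (j : ℕ) (w : L),
      (w ∈ (LieModule.lowerCentralSeries F L L j : Submodule F L)
        ↔ w ∈ LieModule.lowerCentralSeries F L L j) :=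
    fun j w => Iff.rfl
  have haddN : ∀ {j : ℕ} {A B : L}, A ∈ LieModule.lowerCentralSeries F L L j →
      B ∈ LieModule.lowerCentralSeries F L L j →
      A + B ∈ LieModule.lowerCentralSeries F L L j := by
    intro j A B hA hB
    rw [← hmemco] at hA hB ⊢
    exact Submodule.add_mem _ hA hB
  have hsmulN : ∀ {j : ℕ} (c : F) {A : L}, A ∈ LieModule.lowerCentralSeries F L L j →
      c • A ∈ LieModule.lowerCentralSeries F L L j := by
    intro j c A hA
    rw [← hmemco] at hA ⊢
    exact Submodule.smul_mem _ c hA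
  have hnegN : ∀ {j : ℕ} {A : L}, A ∈ LieModule.lowerCentralSeries F L L j →
      -A ∈ LieModule.lowerCentralSeries F L L j := by
    intro j A hA
    rw [← hmemco] at hA ⊢
    exact Submodule.neg_mem _ hA
  have hsubN : ∀ {j : ℕ} {A B : L}, A ∈ LieModule.lowerCentralSeries F L L j →
      B ∈ LieModule.lowerCentralSeries F L L j →
      A - B ∈ LieModule.lowerCentralSeries F L L j := by
    intro j A B hA hB
    rw [sub_eq_add_neg]
    exact haddN hA (hnegN hB)
  have hzeroN : ∀ (j : ℕ), (0 : L) ∈ LieModule.lowerCentralSeries F L L j := by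
    intro j
    rw [← hmemco]
    exact Submodule.zero_mem _
  -- every bracket is in C²
  have hN1mem : ∀ a b : L, ⁅a, b⁆ ∈ LieModule.lowerCentralSeries F L L 1 := by
    intro a b
    rw [show (1 : ℕ) = 0 + 1 from rfl]
    refine stmt7_mem_N_succ F a ?_
    rw [LieModule.lowerCentralSeries_zero]
    exact LieSubmodule.mem_top _
  -- L = F x + F y + C²
  have hspan : ∀ v : L, ∃ α β : F, ∃ n ∈ LieModule.lowerCentralSeries F L L 1,
      v = α • x + β • y + n := by
    intro v
    let K : LieSubalgebra F L :=
      { Submodule.span F {x, y} ⊔ (LieModule.lowerCentralSeries F L L 1 : Submodule F L) with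
        lie_mem' := fun {a b} _ _ => Submodule.mem_sup_right (by
          rw [hmemco]
          exact hN1mem a b) }
    have hsub : {x, y} ⊆ (K : Set L) := by
      intro t ht
      rcases ht with h | h
      · subst h
        exact Submodule.mem_sup_left (Submodule.subset_span (by simp))
      · simp only [Set.mem_singleton_iff] at h
        subst h
        exact Submodule.mem_sup_left (Submodule.subset_span (by simp))
    have hK : v ∈ K := by
      have h := LieSubalgebra.lieSpan_le.mpr hsub
      rw [hxy] at h
      exact h (LieSubalgebra.mem_top v)
    have hK' : v ∈ Submodule.span F {x, y}
        ⊔ (LieModule.lowerCentralSeries F L L 1 : Submodule F L) := hK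
    rcases Submodule.mem_sup.mp hK' with ⟨sxy, hs, n, hn, rfl⟩
    rcases Submodule.mem_span_pair.mp hs with ⟨α, β, rfl⟩
    exact ⟨α, β, n, (hmemco 1 n).mp hn, rfl⟩
  -- bracket expansion
  have hbrexp : ∀ (α β α' β' : F) (n n' : L),
      n ∈ LieModule.lowerCentralSeries F L L 1 →
      n' ∈ LieModule.lowerCentralSeries F L L 1 →
      ⁅α • x + β • y + n, α' • x + β' • y + n'⁆ - (α * β' - β * α') • ⁅x, y⁆
        ∈ LieModule.lowerCentralSeries F L L 2 := by
    intro α β α' β' n n' hn hn'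
    have h1 : ⁅y, x⁆ = -⁅x, y⁆ := by rw [← lie_skew]
    have h2 : ⁅n, x⁆ = -⁅x, n⁆ := by rw [← lie_skew]
    have h3 : ⁅n, y⁆ = -⁅y, n⁆ := by rw [← lie_skew]
    have expand : ⁅α • x + β • y + n, α' • x + β' • y + n'⁆
        = (α * β' - β * α') • ⁅x, y⁆ +
          (α • ⁅x, n'⁆ + β • ⁅y, n'⁆ - α' • ⁅x, n⁆ - β' • ⁅y, n⁆ + ⁅n, n'⁆) := by
      simp only [lie_add, add_lie, lie_smul, smul_lie, lie_self, smul_zero, smul_neg,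
        h1, h2, h3]
      module
    rw [expand, add_sub_cancel_left]
    have e1 : ⁅x, n'⁆ ∈ LieModule.lowerCentralSeries F L L 2 := stmt7_mem_N_succ F x hn'
    have e2 : ⁅y, n'⁆ ∈ LieModule.lowerCentralSeries F L L 2 := stmt7_mem_N_succ F y hn'
    have e3 : ⁅x, n⁆ ∈ LieModule.lowerCentralSeries F L L 2 := stmt7_mem_N_succ F x hn
    have e4 : ⁅y, n⁆ ∈ LieModule.lowerCentralSeries F L L 2 := stmt7_mem_N_succ F y hn
    have e5 : ⁅n, n'⁆ ∈ LieModule.lowerCentralSeries F L L 2 := stmt7_mem_N_succ F n hn'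
    exact haddN (hsubN (hsubN (haddN (hsmulN α e1) (hsmulN β e2)) (hsmulN α' e3))
      (hsmulN β' e4)) e5
  -- if all brackets are in C³ then we get a contradiction
  have hstat : (∀ u v : L, ⁅u, v⁆ ∈ LieModule.lowerCentralSeries F L L 2) → False := by
    intro h
    have hmono : ∀ j : ℕ, LieModule.lowerCentralSeries F L L 1
        ≤ LieModule.lowerCentralSeries F L L (j + 1) := by
      intro j
      induction j with
      | zero => exact le_refl _
      | succ j ih =>
        have h12 : LieModule.lowerCentralSeries F L L 1
            ≤ LieModule.lowerCentralSeries F L L 2 := by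
          intro w hw
          have := stmt7_N1_le F (LieModule.lowerCentralSeries F L L 2 : Submodule F L)
            (fun u v => (hmemco 2 _).mpr (h u v)) w hw
          exact (hmemco 2 w).mp this
        have hstep2 : ∀ i i' : ℕ,
            LieModule.lowerCentralSeries F L L i ≤ LieModule.lowerCentralSeries F L L i' →
            LieModule.lowerCentralSeries F L L (i + 1)
              ≤ LieModule.lowerCentralSeries F L L (i' + 1) := by
          intro i i' hii
          rw [LieModule.lowerCentralSeries_succ, LieModule.lowerCentralSeries_succ]
          exact LieSubmodule.mono_lie_right _ hii
        exact le_trans h12 (hstep2 1 (j + 1) ih)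
    obtain ⟨k, hk⟩ := hnilp
    have hz : ⁅a₀, b₀⁆ = 0 := by
      cases k with
      | zero =>
        have htop : (⊤ : LieSubmodule F L L) = ⊥ := by
          rw [← LieModule.lowerCentralSeries_zero (R := F) (L := L) (M := L)]
          exact hk
        have : a₀ ∈ (⊥ : LieSubmodule F L L) := htop ▸ LieSubmodule.mem_top a₀
        rw [(LieSubmodule.mem_bot a₀).mp this, zero_lie]
      | succ j =>
        have := hmono j (hN1mem a₀ b₀)
        rw [hk] at this
        exact (LieSubmodule.mem_bot _).mp this
    exact hab₀ hz
  -- independence of x, y modulo C²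
  have hA : ∀ α β : F, α • x + β • y ∈ LieModule.lowerCentralSeries F L L 1 →
      α = 0 ∧ β = 0 := by
    intro α β hmem
    have hcaseβ : β ≠ 0 → False := by
      intro hb
      apply hstat
      intro u v
      have hdec : ∀ w : L, ∃ a : F, ∃ n ∈ LieModule.lowerCentralSeries F L L 1,
          w = a • x + (0 : F) • y + n := by
        intro w
        obtain ⟨a', b', n, hn, rfl⟩ := hspan w
        refine ⟨a' - b' * β⁻¹ * α, (b' * β⁻¹) • (α • x + β • y) + n,
          haddN (hsmulN _ hmem) hn, ?_⟩
        have hββ : β⁻¹ * β = 1 := inv_mul_cancel₀ hb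
        match_scalars
        · ring
        · field_simp
          ring
        · ring
      obtain ⟨au, nu, hnu, hu⟩ := hdec u
      obtain ⟨av, nv, hnv, hv⟩ := hdec v
      have h2 := hbrexp au 0 av 0 nu nv hnu hnv
      rw [← hu, ← hv] at h2
      simpa using h2
    have hcaseα : α ≠ 0 → False := by
      intro ha
      apply hstat
      intro u v
      have hdec : ∀ w : L, ∃ b : F, ∃ n ∈ LieModule.lowerCentralSeries F L L 1,
          w = (0 : F) • x + b • y + n := by
        intro w
        obtain ⟨a', b', n, hn, rfl⟩ := hspan w
        refine ⟨b' - a' * α⁻¹ * β, (a' * α⁻¹) • (α • x + β • y) + n,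
          haddN (hsmulN _ hmem) hn, ?_⟩
        have hαα : α⁻¹ * α = 1 := inv_mul_cancel₀ ha
        match_scalars
        · field_simp
          ring
        · ring
        · ring
      obtain ⟨au, nu, hnu, hu⟩ := hdec u
      obtain ⟨av, nv, hnv, hv⟩ := hdec v
      have h2 := hbrexp 0 au 0 av nu nv hnu hnv
      rw [← hu, ← hv] at h2
      simpa using h2
    exact ⟨by_contra fun h => hcaseα h, by_contra fun h => hcaseβ h⟩
  -- e = ⁅x,y⁆ is not in C³
  have heN2 : ⁅x, y⁆ ∉ LieModule.lowerCentralSeries F L L 2 := by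
    intro he
    apply hstat
    intro u v
    obtain ⟨αu, βu, nu, hnu, hu⟩ := hspan u
    obtain ⟨αv, βv, nv, hnv, hv⟩ := hspan v
    have h2 := hbrexp αu βu αv βv nu nv hnu hnv
    rw [← hu, ← hv] at h2
    have : ⁅u, v⁆ = (⁅u, v⁆ - (αu * βv - βu * αv) • ⁅x, y⁆)
        + (αu * βv - βu * αv) • ⁅x, y⁆ := by abel
    rw [this]
    exact haddN h2 (hsmulN _ he)
  -- separating functionals
  have hxU : x ∉ Submodule.span F {y} ⊔ (LieModule.lowerCentralSeries F L L 1 : Submodule F L) := by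
    intro h
    rcases Submodule.mem_sup.mp h with ⟨s, hs, n, hn, hsum⟩
    rcases Submodule.mem_span_singleton.mp hs with ⟨c, rfl⟩
    have hmem : (1 : F) • x + (-c) • y ∈ LieModule.lowerCentralSeries F L L 1 := by
      have : (1 : F) • x + (-c) • y = n := by
        rw [← hsum]; match_scalars <;> ring
      rw [this]
      exact (hmemco 1 n).mp hn
    exact one_ne_zero ((hA 1 (-c) hmem).1)
  have hyU : y ∉ Submodule.span F {x} ⊔ (LieModule.lowerCentralSeries F L L 1 : Submodule F L) := by
    intro h
    rcases Submodule.mem_sup.mp h with ⟨s, hs, n, hn, hsum⟩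
    rcases Submodule.mem_span_singleton.mp hs with ⟨c, rfl⟩
    have hmem : (-c) • x + (1 : F) • y ∈ LieModule.lowerCentralSeries F L L 1 := by
      have : (-c) • x + (1 : F) • y = n := by
        rw [← hsum]; match_scalars <;> ring
      rw [this]
      exact (hmemco 1 n).mp hn
    exact one_ne_zero ((hA (-c) 1 hmem).2)
  have heU : ⁅x, y⁆ ∉ Submodule.span F {x, y}
      ⊔ (LieModule.lowerCentralSeries F L L 2 : Submodule F L) := by
    intro h
    rcases Submodule.mem_sup.mp h with ⟨s, hs, n, hn, hsum⟩
    rcases Submodule.mem_span_pair.mp hs with ⟨α, β, rfl⟩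
    have hn1 : n ∈ LieModule.lowerCentralSeries F L L 1 := by
      refine LieModule.antitone_lowerCentralSeries F L L (by omega : (1:ℕ) ≤ 2) ?_
      exact (hmemco 2 n).mp hn
    have hmem : α • x + β • y ∈ LieModule.lowerCentralSeries F L L 1 := by
      have : α • x + β • y = ⁅x, y⁆ - n := by rw [← hsum]; abel
      rw [this]
      exact hsubN (hN1mem x y) hn1
    obtain ⟨hα, hβ⟩ := hA α β hmem
    apply heN2
    have : ⁅x, y⁆ = n := by
      rw [← hsum, hα, hβ]; simp
    rw [this]
    exact (hmemco 2 n).mp hn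
  obtain ⟨πx, hπxx, hπx0⟩ := stmt7_sep F _ x hxU
  obtain ⟨πy, hπyy, hπy0⟩ := stmt7_sep F _ y hyU
  obtain ⟨πe, hπee, hπe0⟩ := stmt7_sep F _ (⁅x, y⁆) heU
  have hπxN1 : ∀ n ∈ LieModule.lowerCentralSeries F L L 1, πx n = 0 := fun n hn =>
    hπx0 n (Submodule.mem_sup_right ((hmemco 1 n).mpr hn))
  have hπyN1 : ∀ n ∈ LieModule.lowerCentralSeries F L L 1, πy n = 0 := fun n hn =>
    hπy0 n (Submodule.mem_sup_right ((hmemco 1 n).mpr hn))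
  have hπeN2 : ∀ n ∈ LieModule.lowerCentralSeries F L L 2, πe n = 0 := fun n hn =>
    hπe0 n (Submodule.mem_sup_right ((hmemco 2 n).mpr hn))
  have hπxy : πx y = 0 := hπx0 y (Submodule.mem_sup_left (Submodule.mem_span_singleton_self y))
  have hπyx : πy x = 0 := hπy0 x (Submodule.mem_sup_left (Submodule.mem_span_singleton_self x))
  have hπex : πe x = 0 := hπe0 x (Submodule.mem_sup_left (Submodule.subset_span (by simp)))
  have hπey : πe y = 0 := hπe0 y (Submodule.mem_sup_left (Submodule.subset_span (by simp)))
  -- canonical coordinates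
  have hres : ∀ v : L, ∃ n ∈ LieModule.lowerCentralSeries F L L 1,
      v = (πx v) • x + (πy v) • y + n := by
    intro v
    obtain ⟨α, β, n, hn, rfl⟩ := hspan v
    have hx : πx (α • x + β • y + n) = α := by
      simp [map_add, map_smul, hπxx, hπxy, hπxN1 n hn]
    have hy : πy (α • x + β • y + n) = β := by
      simp [map_add, map_smul, hπyy, hπyx, hπyN1 n hn]
    exact ⟨n, hn, by rw [hx, hy]⟩
  have hπxbr : ∀ a b : L, πx ⁅a, b⁆ = 0 := fun a b => hπxN1 _ (hN1mem a b)
  have hπybr : ∀ a b : L, πy ⁅a, b⁆ = 0 := fun a b => hπyN1 _ (hN1mem a b)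
  have hπebr : ∀ a b : L, πe ⁅a, b⁆ = πx a * πy b - πy a * πx b := by
    intro a b
    obtain ⟨n, hn, ha⟩ := hres a
    obtain ⟨n', hn', hb⟩ := hres b
    have h2 := hbrexp (πx a) (πy a) (πx b) (πy b) n n' hn hn'
    rw [← ha, ← hb] at h2
    have h3 := hπeN2 _ h2
    have h4 : πe ⁅a, b⁆ - (πx a * πy b - πy a * πx b) * πe ⁅x, y⁆ = 0 := by
      simpa [map_sub, map_smul, smul_eq_mul] using h3
    rw [hπee, mul_one] at h4
    exact sub_eq_zero.mp h4
  -- the depth of the lower central series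
  have hN1ne : LieModule.lowerCentralSeries F L L 1 ≠ ⊥ := by
    intro h
    apply hab₀
    have := hN1mem a₀ b₀
    rw [h] at this
    exact (LieSubmodule.mem_bot _).mp this
  have hN0ne : LieModule.lowerCentralSeries F L L 0 ≠ ⊥ := by
    intro h
    apply hab₀
    have ha : a₀ ∈ LieModule.lowerCentralSeries F L L 0 := by
      rw [LieModule.lowerCentralSeries_zero]
      exact LieSubmodule.mem_top _
    rw [h] at ha
    rw [(LieSubmodule.mem_bot _).mp ha, zero_lie]
  have hk₀ : LieModule.lowerCentralSeries F L L (Nat.find hnilp) = ⊥ := Nat.find_spec hnilp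
  have hk₀2 : 2 ≤ Nat.find hnilp := by
    by_contra hlt
    push_neg at hlt
    have h01 : Nat.find hnilp = 0 ∨ Nat.find hnilp = 1 := by omega
    rcases h01 with h | h
    · rw [h] at hk₀; exact hN0ne hk₀
    · rw [h] at hk₀; exact hN1ne hk₀
  set s := Nat.find hnilp - 2 with hsdef
  have hs1 : LieModule.lowerCentralSeries F L L (s + 1) ≠ ⊥ :=
    Nat.find_min hnilp (by omega)
  have hs2 : LieModule.lowerCentralSeries F L L (s + 2) = ⊥ := by
    have h : s + 2 = Nat.find hnilp := by omega
    rw [h]; exact hk₀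
  have hbotbr : ∀ (w r : L), r ∈ LieModule.lowerCentralSeries F L L (s + 1) → ⁅w, r⁆ = 0 := by
    intro w r hr
    have := stmt7_mem_N_succ F w hr
    rw [show s + 1 + 1 = s + 2 from rfl, hs2] at this
    exact (LieSubmodule.mem_bot _).mp this
  have hC : ∀ q ∈ LieModule.lowerCentralSeries F L L s,
      ∀ p ∈ LieModule.lowerCentralSeries F L L 1, ⁅p, q⁆ = 0 := by
    intro q hq p hp
    let φ : L →ₗ[F] L :=
      { toFun := fun p => ⁅p, q⁆
        map_add' := fun a b => add_lie a b q
        map_smul' := fun c a => smul_lie c a q }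
    have hker := stmt7_N1_le F (LinearMap.ker φ) (fun u v => by
      have h1 : ⁅v, q⁆ ∈ LieModule.lowerCentralSeries F L L (s + 1) := stmt7_mem_N_succ F v hq
      have h2 : ⁅u, q⁆ ∈ LieModule.lowerCentralSeries F L L (s + 1) := stmt7_mem_N_succ F u hq
      have : φ ⁅u, v⁆ = 0 := by
        show ⁅(⁅u, v⁆ : L), q⁆ = 0
        rw [lie_lie, hbotbr u _ h1, hbotbr v _ h2, sub_zero]
      exact LinearMap.mem_ker.mpr this) p hp
    exact LinearMap.mem_ker.mp hker
  -- choose z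
  have hum : ∃ u mm : L, mm ∈ LieModule.lowerCentralSeries F L L s ∧ ⁅u, mm⁆ ≠ 0 := by
    by_contra h
    push_neg at h
    apply hs1
    rw [LieModule.lowerCentralSeries_succ, eq_bot_iff, LieSubmodule.lie_le_iff]
    intro w _ mm hmm
    rw [LieSubmodule.mem_bot]
    exact h w mm hmm
  obtain ⟨u, mm, hmmNs, hum0⟩ := hum
  obtain ⟨αu, βu, nu, hnu, hudec⟩ := hspan u
  have humval : ⁅u, mm⁆ = αu • ⁅x, mm⁆ + βu • ⁅y, mm⁆ := by
    rw [hudec]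
    rw [add_lie, add_lie, smul_lie, smul_lie, hC mm hmmNs nu hnu, add_zero]
  have hxyor : ⁅x, mm⁆ ≠ 0 ∨ ⁅y, mm⁆ ≠ 0 := by
    by_contra h
    push_neg at h
    apply hum0
    rw [humval, h.1, h.2, smul_zero, smul_zero, add_zero]
  obtain ⟨m₁, m₂, hm₁s, hm₂s, hz0⟩ : ∃ m₁ m₂ : L,
      m₁ ∈ LieModule.lowerCentralSeries F L L s ∧
      m₂ ∈ LieModule.lowerCentralSeries F L L s ∧ ⁅m₁, y⁆ + ⁅x, m₂⁆ ≠ 0 := by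
    rcases hxyor with hx' | hy'
    · exact ⟨0, mm, hzeroN s, hmmNs, by simpa [zero_lie] using hx'⟩
    · refine ⟨mm, 0, hmmNs, hzeroN s, ?_⟩
      have : ⁅mm, y⁆ = -⁅y, mm⁆ := by rw [← lie_skew]
      simp only [lie_zero, add_zero, this]
      exact neg_ne_zero.mpr hy'
  have hzmem : ⁅m₁, y⁆ + ⁅x, m₂⁆ ∈ LieModule.lowerCentralSeries F L L (s + 1) := by
    have h1 : ⁅m₁, y⁆ ∈ LieModule.lowerCentralSeries F L L (s + 1) := by
      have : ⁅m₁, y⁆ = -⁅y, m₁⁆ := by rw [← lie_skew]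
      rw [this]
      exact hnegN (stmt7_mem_N_succ F y hm₁s)
    exact haddN h1 (stmt7_mem_N_succ F x hm₂s)
  set z := ⁅m₁, y⁆ + ⁅x, m₂⁆ with hzdef
  have hzc : ∀ w : L, ⁅w, z⁆ = 0 := fun w => hbotbr w z hzmem
  have hzc' : ∀ w : L, ⁅z, w⁆ = 0 := fun w => by
    have : ⁅z, w⁆ = -⁅w, z⁆ := by rw [← lie_skew]
    rw [this, hzc, neg_zero]
  -- brackets with m₁, m₂
  have hmb : ∀ mi : L, mi ∈ LieModule.lowerCentralSeries F L L s →
      ∀ b : L, ⁅mi, b⁆ = (πx b) • ⁅mi, x⁆ + (πy b) • ⁅mi, y⁆ := by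
    intro mi hmi b
    obtain ⟨n, hn, hb⟩ := hres b
    have hmin : ⁅mi, n⁆ = 0 := by
      have : ⁅mi, n⁆ = -⁅n, mi⁆ := by rw [← lie_skew]
      rw [this, hC mi hmi n hn, neg_zero]
    conv_lhs => rw [hb]
    rw [lie_add, lie_add, lie_smul, lie_smul, hmin, add_zero]
  -- the local derivation
  refine ⟨πe.smulRight z, ?_, ?_⟩
  · intro v
    by_cases hvx : πx v = 0
    · by_cases hvy : πy v = 0
      · -- use the special derivation D₀
        refine ⟨⟨πx.smulRight m₁ + πy.smulRight m₂ + πe.smulRight z, fun a b => ?_⟩, ?_⟩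
        · simp only [LinearMap.add_apply, LinearMap.smulRight_apply]
          have ham1 : ⁅a, m₁⁆ = -((πx a) • ⁅m₁, x⁆ + (πy a) • ⁅m₁, y⁆) := by
            rw [← hmb m₁ hm₁s a, ← lie_skew]
          have ham2 : ⁅a, m₂⁆ = -((πx a) • ⁅m₂, x⁆ + (πy a) • ⁅m₂, y⁆) := by
            rw [← hmb m₂ hm₂s a, ← lie_skew]
          have hbm1 : ⁅b, m₁⁆ = -((πx b) • ⁅m₁, x⁆ + (πy b) • ⁅m₁, y⁆) := by
            rw [← hmb m₁ hm₁s b, ← lie_skew]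
          have hbm2 : ⁅b, m₂⁆ = -((πx b) • ⁅m₂, x⁆ + (πy b) • ⁅m₂, y⁆) := by
            rw [← hmb m₂ hm₂s b, ← lie_skew]
          have hxm2 : ⁅x, m₂⁆ = -⁅m₂, x⁆ := by rw [← lie_skew]
          rw [hπxbr, hπybr, hπebr]
          simp only [lie_add, lie_smul, ham1, ham2, hbm1, hbm2, hzc a, hzc b,
            smul_zero, add_zero, zero_smul, zero_add]
          rw [hzdef, hxm2]
          module
        · simp only [LieDerivation.mk_coe, LinearMap.add_apply, LinearMap.smulRight_apply,
            hvx, hvy, zero_smul, zero_add]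
      · -- πy v ≠ 0
        refine ⟨⟨((πe v * (πy v)⁻¹) • πy).smulRight z, fun a b => ?_⟩, ?_⟩
        · simp only [LinearMap.smulRight_apply, LinearMap.smul_apply, smul_eq_mul]
          rw [hπybr, mul_zero, zero_smul, lie_smul, lie_smul, hzc a, hzc b,
            smul_zero, smul_zero, sub_zero]
        · simp only [LieDerivation.mk_coe, LinearMap.smulRight_apply, LinearMap.smul_apply,
            smul_eq_mul]
          rw [mul_assoc, inv_mul_cancel₀ hvy, mul_one]
    · -- πx v ≠ 0
      refine ⟨⟨((πe v * (πx v)⁻¹) • πx).smulRight z, fun a b => ?_⟩, ?_⟩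
      · simp only [LinearMap.smulRight_apply, LinearMap.smul_apply, smul_eq_mul]
        rw [hπxbr, mul_zero, zero_smul, lie_smul, lie_smul, hzc a, hzc b,
          smul_zero, smul_zero, sub_zero]
      · simp only [LieDerivation.mk_coe, LinearMap.smulRight_apply, LinearMap.smul_apply,
          smul_eq_mul]
        rw [mul_assoc, inv_mul_cancel₀ hvx, mul_one]
  · intro hle
    have h := hle x y
    have h1 : πe.smulRight z ⁅x, y⁆ = z := by
      rw [LinearMap.smulRight_apply, hπee, one_smul]
    have h2 : ⁅πe.smulRight z x, y⁆ + ⁅x, πe.smulRight z y⁆ = 0 := by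
      simp [LinearMap.smulRight_apply, hπex, hπey]
    rw [h1, h2] at h
    exact hz0 h
end

section
/- Let C be the 6-dimensional complex commutative (non-associative) algebra with basis {e_1,…,e_6} and nonzero products e_1e_2 = e_2e_1 = e_3, e_1e_3 = e_3e_1 = e_4, e_1e_4 = e_4e_1 = e_5, e_2e_3 = e_3e_2 = e_5, e_2e_4 = e_4e_2 = e_6 (all other products of basis elements are zero). Then every local derivation of C is a derivation of C. -/
lemma key10 {C : Type*} [NonUnitalNonAssocRing C] [Module ℂ C]
    [SMulCommClass ℂ C C] [IsScalarTower ℂ C C]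
    (e : Module.Basis (Fin 6) ℂ C)
    (h12 : e 0 * e 1 = e 2) (h21 : e 1 * e 0 = e 2)
    (h13 : e 0 * e 2 = e 3) (h31 : e 2 * e 0 = e 3)
    (h14 : e 0 * e 3 = e 4) (h41 : e 3 * e 0 = e 4)
    (h23 : e 1 * e 2 = e 4) (h32 : e 2 * e 1 = e 4)
    (h24 : e 1 * e 3 = e 5) (h42 : e 3 * e 1 = e 5)
    (h0 : ∀ i j : Fin 6,
      ((i : ℕ), (j : ℕ)) ∉ ({(0,1), (1,0), (0,2), (2,0), (0,3), (3,0),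
        (1,2), (2,1), (1,3), (3,1)} : Set (ℕ × ℕ)) → e i * e j = 0)
    (D : C →ₗ[ℂ] C)
    (hD : ∀ y z : C, D (y * z) = D y * z + y * D z) :
    ∃ a p q r s : ℂ,
      D (e 0) = a • e 0 + p • e 4 + q • e 5 ∧
      D (e 1) = (2*a) • e 1 + r • e 4 + s • e 5 ∧
      D (e 2) = (3*a) • e 2 ∧ D (e 3) = (4*a) • e 3 ∧
      D (e 4) = (5*a) • e 4 ∧ D (e 5) = (6*a) • e 5 := by
  have z00 : e 0 * e 0 = 0 := h0 0 0 (by simp <;> decide)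
  have z40 : e 4 * e 0 = 0 := h0 4 0 (by simp <;> decide)
  have z50 : e 5 * e 0 = 0 := h0 5 0 (by simp <;> decide)
  have z04 : e 0 * e 4 = 0 := h0 0 4 (by simp <;> decide)
  have z05 : e 0 * e 5 = 0 := h0 0 5 (by simp <;> decide)
  have z11 : e 1 * e 1 = 0 := h0 1 1 (by simp <;> decide)
  have z41 : e 4 * e 1 = 0 := h0 4 1 (by simp <;> decide)
  have z51 : e 5 * e 1 = 0 := h0 5 1 (by simp <;> decide)
  have z14 : e 1 * e 4 = 0 := h0 1 4 (by simp <;> decide)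
  have z15 : e 1 * e 5 = 0 := h0 1 5 (by simp <;> decide)
  have z42 : e 4 * e 2 = 0 := h0 4 2 (by simp <;> decide)
  have z52 : e 5 * e 2 = 0 := h0 5 2 (by simp <;> decide)
  have z43 : e 4 * e 3 = 0 := h0 4 3 (by simp <;> decide)
  have z53 : e 5 * e 3 = 0 := h0 5 3 (by simp <;> decide)
  have hrep0 := (e.sum_repr (D (e 0))).symm
  rw [Fin.sum_univ_six] at hrep0
  have hrep1 := (e.sum_repr (D (e 1))).symm
  rw [Fin.sum_univ_six] at hrep1
  -- constraint from e0 * e0 = 0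
  have h00 := hD (e 0) (e 0)
  rw [z00, map_zero] at h00
  rw [hrep0] at h00
  simp only [add_mul, mul_add, smul_mul_assoc, mul_smul_comm, z00, h21, h31, h41, z40, z50,
    h12, h13, h14, z04, z05, smul_zero, add_zero, zero_add] at h00
  have hc1 : e.repr (D (e 0)) 1 = 0 := by
    have h := congrArg (fun v => e.repr v 2) h00; simp at h; linear_combination -h/2
  have hc2 : e.repr (D (e 0)) 2 = 0 := by
    have h := congrArg (fun v => e.repr v 3) h00; simp at h; linear_combination -h/2
  have hc3 : e.repr (D (e 0)) 3 = 0 := by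
    have h := congrArg (fun v => e.repr v 4) h00; simp at h; linear_combination -h/2
  -- constraint from e1 * e1 = 0
  have h11 := hD (e 1) (e 1)
  rw [z11, map_zero] at h11
  rw [hrep1] at h11
  simp only [add_mul, mul_add, smul_mul_assoc, mul_smul_comm, z11, h12, h32, h42, z41, z51,
    h21, h23, h24, z14, z15, smul_zero, add_zero, zero_add] at h11
  have hd0 : e.repr (D (e 1)) 0 = 0 := by
    have h := congrArg (fun v => e.repr v 2) h11; simp at h; linear_combination -h/2
  have hd2 : e.repr (D (e 1)) 2 = 0 := by
    have h := congrArg (fun v => e.repr v 4) h11; simp at h; linear_combination -h/2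
  have hd3 : e.repr (D (e 1)) 3 = 0 := by
    have h := congrArg (fun v => e.repr v 5) h11; simp at h; linear_combination -h/2
  -- clean forms
  have hD0 : D (e 0) = e.repr (D (e 0)) 0 • e 0 + e.repr (D (e 0)) 4 • e 4
      + e.repr (D (e 0)) 5 • e 5 := by
    conv_lhs => rw [hrep0]
    rw [hc1, hc2, hc3]; module
  have hD1 : D (e 1) = e.repr (D (e 1)) 1 • e 1 + e.repr (D (e 1)) 4 • e 4
      + e.repr (D (e 1)) 5 • e 5 := by
    conv_lhs => rw [hrep1]
    rw [hd0, hd2, hd3]; module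
  set a := e.repr (D (e 0)) 0 with ha
  set b := e.repr (D (e 1)) 1 with hb
  -- D (e 2)
  have h2 : D (e 2) = (a + b) • e 2 := by
    have h := hD (e 0) (e 1)
    rw [h12, hD0, hD1] at h
    simp only [add_mul, mul_add, smul_mul_assoc, mul_smul_comm, h12, z41, z51, z04, z05,
      smul_zero, add_zero, zero_add] at h
    rw [h]; module
  -- D (e 3)
  have h3 : D (e 3) = (2*a + b) • e 3 := by
    have h := hD (e 0) (e 2)
    rw [h13, hD0, h2] at h
    simp only [add_mul, mul_add, smul_mul_assoc, mul_smul_comm, h13, z42, z52,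
      smul_zero, add_zero, zero_add] at h
    rw [h]; module
  -- D (e 4), two ways
  have h4 : D (e 4) = (3*a + b) • e 4 := by
    have h := hD (e 0) (e 3)
    rw [h14, hD0, h3] at h
    simp only [add_mul, mul_add, smul_mul_assoc, mul_smul_comm, h14, z43, z53,
      smul_zero, add_zero, zero_add] at h
    rw [h]; module
  have h4' : D (e 4) = (a + 2*b) • e 4 := by
    have h := hD (e 1) (e 2)
    rw [h23, hD1, h2] at h
    simp only [add_mul, mul_add, smul_mul_assoc, mul_smul_comm, h23, z42, z52,
      smul_zero, add_zero, zero_add] at h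
    rw [h]; module
  have hba : b = 2*a := by
    have h := h4.symm.trans h4'
    have h' := congrArg (fun v => e.repr v 4) h
    simp at h'
    linear_combination -h'
  -- D (e 5)
  have h5 : D (e 5) = (2*a + 2*b) • e 5 := by
    have h := hD (e 1) (e 3)
    rw [h24, hD1, h3] at h
    simp only [add_mul, mul_add, smul_mul_assoc, mul_smul_comm, h24, z43, z53,
      smul_zero, add_zero, zero_add] at h
    rw [h]; module
  refine ⟨a, e.repr (D (e 0)) 4, e.repr (D (e 0)) 5, e.repr (D (e 1)) 4, e.repr (D (e 1)) 5,
    hD0, ?_, ?_, ?_, ?_, ?_⟩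
  · conv_lhs => rw [hD1, hba]
  · rw [h2, hba]; module
  · rw [h3, hba]; module
  · rw [h4, hba]; module
  · rw [h5, hba]; module




set_option maxHeartbeats 2000000 in
/-- On the 6-dimensional complex commutative non-associative algebra with basis
`e_1, …, e_6` and nonzero products `e_1e_2 = e_3`, `e_1e_3 = e_4`, `e_1e_4 = e_5`,
`e_2e_3 = e_5`, `e_2e_4 = e_6` (together with their symmetric counterparts, all
other products of basis elements being zero), every local derivation is a
derivation. Here the basis is indexed by `Fin 6`, with `e_i` at index `i - 1`. -/
theorem stmt_10 (C : Type*) [NonUnitalNonAssocRing C] [Module ℂ C]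
    [SMulCommClass ℂ C C] [IsScalarTower ℂ C C]
    (e : Module.Basis (Fin 6) ℂ C)
    (h12 : e 0 * e 1 = e 2) (h21 : e 1 * e 0 = e 2)
    (h13 : e 0 * e 2 = e 3) (h31 : e 2 * e 0 = e 3)
    (h14 : e 0 * e 3 = e 4) (h41 : e 3 * e 0 = e 4)
    (h23 : e 1 * e 2 = e 4) (h32 : e 2 * e 1 = e 4)
    (h24 : e 1 * e 3 = e 5) (h42 : e 3 * e 1 = e 5)
    (h0 : ∀ i j : Fin 6,
      ((i : ℕ), (j : ℕ)) ∉ ({(0,1), (1,0), (0,2), (2,0), (0,3), (3,0),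
        (1,2), (2,1), (1,3), (3,1)} : Set (ℕ × ℕ)) → e i * e j = 0)
    (Δ : C →ₗ[ℂ] C)
    (hΔ : ∀ x : C, ∃ D : C →ₗ[ℂ] C,
      (∀ y z : C, D (y * z) = D y * z + y * D z) ∧ Δ x = D x) :
    ∀ x y : C, Δ (x * y) = Δ x * y + x * Δ y := by
  have zz00 : e 0 * e 0 = 0 := h0 0 0 (by simp <;> decide)
  have zz04 : e 0 * e 4 = 0 := h0 0 4 (by simp <;> decide)
  have zz05 : e 0 * e 5 = 0 := h0 0 5 (by simp <;> decide)
  have zz11 : e 1 * e 1 = 0 := h0 1 1 (by simp <;> decide)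
  have zz14 : e 1 * e 4 = 0 := h0 1 4 (by simp <;> decide)
  have zz15 : e 1 * e 5 = 0 := h0 1 5 (by simp <;> decide)
  have zz22 : e 2 * e 2 = 0 := h0 2 2 (by simp <;> decide)
  have zz23 : e 2 * e 3 = 0 := h0 2 3 (by simp <;> decide)
  have zz24 : e 2 * e 4 = 0 := h0 2 4 (by simp <;> decide)
  have zz25 : e 2 * e 5 = 0 := h0 2 5 (by simp <;> decide)
  have zz32 : e 3 * e 2 = 0 := h0 3 2 (by simp <;> decide)
  have zz33 : e 3 * e 3 = 0 := h0 3 3 (by simp <;> decide)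
  have zz34 : e 3 * e 4 = 0 := h0 3 4 (by simp <;> decide)
  have zz35 : e 3 * e 5 = 0 := h0 3 5 (by simp <;> decide)
  have zz40 : e 4 * e 0 = 0 := h0 4 0 (by simp <;> decide)
  have zz41 : e 4 * e 1 = 0 := h0 4 1 (by simp <;> decide)
  have zz42 : e 4 * e 2 = 0 := h0 4 2 (by simp <;> decide)
  have zz43 : e 4 * e 3 = 0 := h0 4 3 (by simp <;> decide)
  have zz44 : e 4 * e 4 = 0 := h0 4 4 (by simp <;> decide)
  have zz45 : e 4 * e 5 = 0 := h0 4 5 (by simp <;> decide)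
  have zz50 : e 5 * e 0 = 0 := h0 5 0 (by simp <;> decide)
  have zz51 : e 5 * e 1 = 0 := h0 5 1 (by simp <;> decide)
  have zz52 : e 5 * e 2 = 0 := h0 5 2 (by simp <;> decide)
  have zz53 : e 5 * e 3 = 0 := h0 5 3 (by simp <;> decide)
  have zz54 : e 5 * e 4 = 0 := h0 5 4 (by simp <;> decide)
  have zz55 : e 5 * e 5 = 0 := h0 5 5 (by simp <;> decide)
  have key := fun (D : C →ₗ[ℂ] C) (hD : ∀ y z : C, D (y * z) = D y * z + y * D z) =>
    key10 e h12 h21 h13 h31 h14 h41 h23 h32 h24 h42 h0 D hD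
  obtain ⟨D0, hD0, he0⟩ := hΔ (e 0)
  obtain ⟨a, p, q, -, -, H0, -, -, -, -, -⟩ := key D0 hD0
  have A0 : Δ (e 0) = a • e 0 + p • e 4 + q • e 5 := he0.trans H0
  obtain ⟨D1, hD1, he1⟩ := hΔ (e 1)
  obtain ⟨b, -, -, r, s, -, H1, -, -, -, -⟩ := key D1 hD1
  have B1 : Δ (e 1) = (2*b) • e 1 + r • e 4 + s • e 5 := he1.trans H1
  obtain ⟨D2, hD2, he2⟩ := hΔ (e 2)
  obtain ⟨c, -, -, -, -, -, -, H2, -, -, -⟩ := key D2 hD2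
  have B2 : Δ (e 2) = (3*c) • e 2 := he2.trans H2
  obtain ⟨D3, hD3, he3⟩ := hΔ (e 3)
  obtain ⟨d, -, -, -, -, -, -, -, H3, -, -⟩ := key D3 hD3
  have B3 : Δ (e 3) = (4*d) • e 3 := he3.trans H3
  obtain ⟨D4, hD4, he4⟩ := hΔ (e 4)
  obtain ⟨f, -, -, -, -, -, -, -, -, H4, -⟩ := key D4 hD4
  have B4 : Δ (e 4) = (5*f) • e 4 := he4.trans H4
  obtain ⟨D5, hD5, he5⟩ := hΔ (e 5)
  obtain ⟨g, -, -, -, -, -, -, -, -, -, H5⟩ := key D5 hD5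
  have B5 : Δ (e 5) = (6*g) • e 5 := he5.trans H5
  -- b = a
  have hb : b = a := by
    obtain ⟨Dx, hDx, hex⟩ := hΔ (e 0 + e 1)
    obtain ⟨α, p2, q2, r2, s2, K0, K1, -, -, -, -⟩ := key Dx hDx
    rw [map_add, map_add, A0, B1, K0, K1] at hex
    have h1 := congrArg (fun v => e.repr v 0) hex; simp at h1
    have h2 := congrArg (fun v => e.repr v 1) hex; simp at h2
    linear_combination h2 - h1
  have hc : c = a := by
    obtain ⟨Dx, hDx, hex⟩ := hΔ (e 0 + e 2)
    obtain ⟨α, p2, q2, -, -, K0, -, K2, -, -, -⟩ := key Dx hDx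
    rw [map_add, map_add, A0, B2, K0, K2] at hex
    have h1 := congrArg (fun v => e.repr v 0) hex; simp at h1
    have h2 := congrArg (fun v => e.repr v 2) hex; simp at h2
    linear_combination h2 - h1
  have hd : d = a := by
    obtain ⟨Dx, hDx, hex⟩ := hΔ (e 0 + e 3)
    obtain ⟨α, p2, q2, -, -, K0, -, -, K3, -, -⟩ := key Dx hDx
    rw [map_add, map_add, A0, B3, K0, K3] at hex
    have h1 := congrArg (fun v => e.repr v 0) hex; simp at h1
    have h2 := congrArg (fun v => e.repr v 3) hex; simp at h2
    linear_combination h2 - h1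
  have hf : f = a := by
    obtain ⟨Dx, hDx, hex⟩ := hΔ (e 2 + e 4)
    obtain ⟨α, -, -, -, -, -, -, K2, -, K4, -⟩ := key Dx hDx
    rw [map_add, map_add, B2, B4, K2, K4] at hex
    have h1 := congrArg (fun v => e.repr v 2) hex; simp at h1
    have h2 := congrArg (fun v => e.repr v 4) hex; simp at h2
    linear_combination h2 - h1 + hc
  have hg : g = a := by
    obtain ⟨Dx, hDx, hex⟩ := hΔ (e 2 + e 5)
    obtain ⟨α, -, -, -, -, -, -, K2, -, -, K5⟩ := key Dx hDx
    rw [map_add, map_add, B2, B5, K2, K5] at hex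
    have h1 := congrArg (fun v => e.repr v 2) hex; simp at h1
    have h2 := congrArg (fun v => e.repr v 5) hex; simp at h2
    linear_combination h2 - h1 + hc
  have A1 : Δ (e 1) = (2*a) • e 1 + r • e 4 + s • e 5 := by rw [B1, hb]
  have A2 : Δ (e 2) = (3*a) • e 2 := by rw [B2, hc]
  have A3 : Δ (e 3) = (4*a) • e 3 := by rw [B3, hd]
  have A4 : Δ (e 4) = (5*a) • e 4 := by rw [B4, hf]
  have A5 : Δ (e 5) = (6*a) • e 5 := by rw [B5, hg]
  suffices hb36 : ∀ i j : Fin 6, Δ (e i * e j) = Δ (e i) * e j + e i * Δ (e j) by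
    have hmain : (LinearMap.mul ℂ C).compr₂ Δ
        = (LinearMap.mul ℂ C).comp Δ + (LinearMap.mul ℂ C).compl₂ Δ := by
      refine Module.Basis.ext e fun i => Module.Basis.ext e fun j => ?_
      simpa using hb36 i j
    intro x y
    have h1 := LinearMap.congr_fun (LinearMap.congr_fun hmain x) y
    simpa using h1
  intro i j
  fin_cases i <;> fin_cases j <;>
    simp only [Fin.reduceFinMk, Fin.isValue, h12, h21, h13, h31, h14, h41, h23, h32, h24, h42,
      zz00, zz04, zz05, zz11, zz14, zz15, zz22, zz23, zz24, zz25, zz32, zz33, zz34, zz35, zz40, zz41, zz42, zz43, zz44, zz45, zz50, zz51, zz52, zz53, zz54, zz55, map_zero, A0, A1, A2, A3, A4, A5,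
      add_mul, mul_add, smul_mul_assoc, mul_smul_comm, smul_zero, zero_add, add_zero,
      zero_smul, smul_add] <;>
    module
end

section
/- Let n be a finite-dimensional 2-step nilpotent Lie algebra over a field F of characteristic zero. Then there exists a local automorphism of n which is not an automorphism. -/
/-- Build a Lie algebra automorphism from a linear map with explicit inverse. -/
private def mkAut {F : Type*} [Field F] {L : Type*} [LieRing L] [LieAlgebra F L]
    (f g : L →ₗ[F] L) (h1 : ∀ x, g (f x) = x) (h2 : ∀ x, f (g x) = x)
    (hlie : ∀ x y : L, f ⁅x, y⁆ = ⁅f x, f y⁆) : L ≃ₗ⁅F⁆ L :=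
  { f with
    map_lie' := fun {x y} => hlie x y
    invFun := g
    left_inv := h1
    right_inv := h2 }

private theorem mkAut_apply {F : Type*} [Field F] {L : Type*} [LieRing L] [LieAlgebra F L]
    (f g : L →ₗ[F] L) (h1 : ∀ x, g (f x) = x) (h2 : ∀ x, f (g x) = x)
    (hlie : ∀ x y : L, f ⁅x, y⁆ = ⁅f x, f y⁆) (x : L) :
    (mkAut f g h1 h2 hlie) x = f x := rfl

/-- Every finite-dimensional 2-step nilpotent Lie algebra over a field of
characteristic zero admits a local automorphism which is not an automorphism. -/
theorem stmt_13 (F : Type*) [Field F] [CharZero F]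
    (L : Type*) [LieRing L] [LieAlgebra F L] [Module.Finite F L]
    (htwo_step : LieModule.lowerCentralSeries F L L 2 = ⊥)
    (hnonab : LieModule.lowerCentralSeries F L L 1 ≠ ⊥) :
    ∃ T : L →ₗ[F] L,
      (∀ x : L, ∃ φ : L ≃ₗ⁅F⁆ L, T x = φ x) ∧
      ¬ (Function.Bijective T ∧ ∀ x y : L, T ⁅x, y⁆ = ⁅T x, T y⁆) := by
  classical
  set N := LieModule.lowerCentralSeries F L L 1 with hN
  set W : Submodule F L := N.toSubmodule with hWdef
  -- every bracket lies in W
  have hbr : ∀ x y : L, ⁅x, y⁆ ∈ W := by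
    intro x y
    show ⁅x, y⁆ ∈ N
    rw [hN]
    rw [show (1 : ℕ) = 0 + 1 from rfl, LieModule.lowerCentralSeries_succ]
    exact LieSubmodule.lie_mem_lie (LieSubmodule.mem_top x) (LieSubmodule.mem_top y)
  -- W is central
  have hcen : ∀ w : L, w ∈ W → ∀ z : L, ⁅z, w⁆ = 0 := by
    intro w hw z
    have h2 : ⁅z, w⁆ ∈ LieModule.lowerCentralSeries F L L 2 := by
      rw [show (2 : ℕ) = 1 + 1 from rfl, LieModule.lowerCentralSeries_succ]
      exact LieSubmodule.lie_mem_lie (LieSubmodule.mem_top z) hw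
    rw [htwo_step] at h2
    simpa using h2
  have hcen' : ∀ w : L, w ∈ W → ∀ z : L, ⁅w, z⁆ = 0 := by
    intro w hw z
    rw [← lie_skew, hcen w hw z, neg_zero]
  obtain ⟨V, hVW⟩ := Submodule.exists_isCompl W
  let P0 : L →ₗ[F] W := Submodule.projectionOnto W V hVW
  let Q : L →ₗ[F] L := W.subtype ∘ₗ P0
  have hQ_mem : ∀ x : L, Q x ∈ W := fun x => (P0 x).2
  have hQ_id : ∀ w : L, w ∈ W → Q w = w := by
    intro w hw
    simp only [Q, LinearMap.comp_apply, Submodule.subtype_apply]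
    rw [show w = ((⟨w, hw⟩ : W) : L) from rfl, Submodule.projectionOnto_apply_left hVW]
  set T : L →ₗ[F] L := LinearMap.id + (3 : F) • Q with hT
  have hT_apply : ∀ x : L, T x = x + (3 : F) • Q x := by intro x; simp [hT]
  refine ⟨T, ?_, ?_⟩
  · -- local automorphism
    intro x
    by_cases hx : x ∈ W
    · -- grading automorphism 2•id + 2•Q, inverse (1/2)•id - (1/4)•Q
      let f : L →ₗ[F] L := (2 : F) • LinearMap.id + (2 : F) • Q
      let g : L →ₗ[F] L := (2 : F)⁻¹ • LinearMap.id - (4 : F)⁻¹ • Q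
      have hf : ∀ z, f z = (2 : F) • z + (2 : F) • Q z := by intro z; simp [f]
      have hg : ∀ z, g z = (2 : F)⁻¹ • z - (4 : F)⁻¹ • Q z := by intro z; simp [g]
      have hQQ : ∀ z, Q (Q z) = Q z := fun z => hQ_id _ (hQ_mem z)
      have h1 : ∀ z, g (f z) = z := by
        intro z
        rw [hf, hg, map_add, map_smul, map_smul, hQQ]
        match_scalars <;> norm_num
      have h2 : ∀ z, f (g z) = z := by
        intro z
        rw [hg, hf, map_sub, map_smul, map_smul, hQQ]
        match_scalars <;> norm_num
      have hlie : ∀ a b : L, f ⁅a, b⁆ = ⁅f a, f b⁆ := by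
        intro a b
        have hZb : ∀ z : L, ⁅z, Q b⁆ = 0 := fun z => hcen _ (hQ_mem b) z
        have hZa : ∀ z : L, ⁅Q a, z⁆ = 0 := fun z => hcen' _ (hQ_mem a) z
        rw [hf, hf, hf, hQ_id _ (hbr a b)]
        simp only [lie_add, add_lie, lie_smul, smul_lie, hZa, hZb, smul_zero,
          add_zero, zero_add]
        match_scalars <;> norm_num
      refine ⟨mkAut f g h1 h2 hlie, ?_⟩
      rw [mkAut_apply, hf, hT_apply, hQ_id _ hx]
      match_scalars <;> norm_num
    · -- x ∉ W : use id + (functional)·(3 • Q x)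
      have hxq : W.mkQ x ≠ 0 := by
        simpa [Submodule.Quotient.mk_eq_zero] using hx
      have hdual : ∃ φ : Module.Dual F (L ⧸ W), φ (W.mkQ x) ≠ 0 := by
        by_contra h
        push_neg at h
        exact hxq ((Module.forall_dual_apply_eq_zero_iff F _).mp h)
      obtain ⟨φ0, hφ0⟩ := hdual
      let f : L →ₗ[F] F := (φ0 (W.mkQ x))⁻¹ • (φ0 ∘ₗ W.mkQ)
      have hfx : f x = 1 := by
        simp only [f, LinearMap.smul_apply, LinearMap.comp_apply, smul_eq_mul]
        exact inv_mul_cancel₀ hφ0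
      have hfW : ∀ w : L, w ∈ W → f w = 0 := by
        intro w hw
        have h0 : W.mkQ w = 0 := by
          simpa using (Submodule.Quotient.mk_eq_zero W).mpr hw
        simp only [f, LinearMap.smul_apply, LinearMap.comp_apply, smul_eq_mul, h0]
        simp
      set c : L := (3 : F) • Q x with hc
      have hcW : c ∈ W := Submodule.smul_mem _ _ (hQ_mem x)
      let D : L →ₗ[F] L := f.smulRight c
      let idL : L →ₗ[F] L := LinearMap.id
      have hD : ∀ z, D z = f z • c := fun z => rfl
      have hDD : ∀ z, D (D z) = 0 := by
        intro z
        rw [hD, hD, map_smul, hfW c hcW]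
        simp
      have h1 : ∀ z, (idL - D) ((idL + D) z) = z := by
        intro z
        simp only [idL, LinearMap.add_apply, LinearMap.sub_apply, LinearMap.id_apply, map_add]
        rw [hDD]
        abel
      have h2 : ∀ z, (idL + D) ((idL - D) z) = z := by
        intro z
        simp only [idL, LinearMap.add_apply, LinearMap.sub_apply, LinearMap.id_apply, map_sub]
        rw [hDD]
        abel
      have hlie : ∀ a b : L, (idL + D) ⁅a, b⁆ = ⁅(idL + D) a, (idL + D) b⁆ := by
        intro a b
        have hZc : ∀ z : L, ⁅z, c⁆ = 0 := hcen c hcW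
        have hCz : ∀ z : L, ⁅c, z⁆ = 0 := hcen' c hcW
        simp only [idL, LinearMap.add_apply, LinearMap.id_apply, hD]
        rw [hfW _ (hbr a b)]
        simp [lie_add, add_lie, lie_smul, smul_lie, hZc, hCz]
      refine ⟨mkAut (idL + D) (idL - D) h1 h2 hlie, ?_⟩
      rw [mkAut_apply, hT_apply]
      simp only [idL, LinearMap.add_apply, LinearMap.id_apply, hD, hfx, one_smul, hc]
  · -- not an automorphism
    rintro ⟨-, hm⟩
    have hex : ∃ a b : L, ⁅a, b⁆ ≠ 0 := by
      by_contra h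
      push_neg at h
      apply hnonab
      rw [hN, show (1 : ℕ) = 0 + 1 from rfl, LieModule.lowerCentralSeries_succ,
        LieModule.lowerCentralSeries_zero]
      rw [LieSubmodule.lie_eq_bot_iff]
      intro y _ m _
      exact h y m
    obtain ⟨a, b, hab⟩ := hex
    have h1 : T ⁅a, b⁆ = (4 : F) • ⁅a, b⁆ := by
      rw [hT_apply, hQ_id _ (hbr a b)]
      match_scalars <;> norm_num
    have h2 : ⁅T a, T b⁆ = ⁅a, b⁆ := by
      have hZb : ∀ z : L, ⁅z, Q b⁆ = 0 := fun z => hcen _ (hQ_mem b) z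
      have hZa : ∀ z : L, ⁅Q a, z⁆ = 0 := fun z => hcen' _ (hQ_mem a) z
      rw [hT_apply, hT_apply]
      simp [lie_add, add_lie, lie_smul, smul_lie, hZa, hZb]
    rw [hm a b, h2] at h1
    have : ((4 : F) - 1) • ⁅a, b⁆ = 0 := by
      rw [sub_smul, one_smul, ← h1, sub_self]
    rw [smul_eq_zero] at this
    rcases this with h | h
    · norm_num at h
    · exact hab h
end

section
/- Let n be a finite-dimensional nilpotent Lie algebra over a field F of characteristic zero with n^p = 0 for some p ≥ 4. If [n^{p-3}, n^2] ≠ 0, then n admits a local automorphism which is not an automorphism. -/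
open LieModule

private lemma lie_lie_le_aux {F L : Type*} [Field F] [LieRing L] [LieAlgebra F L]
    (I J : LieIdeal F L) (N : LieSubmodule F L L) :
    ⁅⁅I, J⁆, N⁆ ≤ ⁅I, ⁅J, N⁆⁆ ⊔ ⁅J, ⁅I, N⁆⁆ := by
  rw [LieSubmodule.lie_le_iff]
  intro x hx m hm
  have hx' : x ∈ (Submodule.span F {w | ∃ y ∈ I, ∃ n ∈ J, ⁅y, n⁆ = w}) := by
    rw [← LieSubmodule.lieIdeal_oper_eq_linear_span']; exact hx
  refine Submodule.span_induction ?_ ?_ ?_ ?_ hx'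
  · rintro u ⟨y, hy, n, hn, rfl⟩
    rw [lie_lie]
    exact sub_mem ((SetLike.le_def.mp le_sup_left)
        (LieSubmodule.lie_mem_lie hy (LieSubmodule.lie_mem_lie hn hm)))
      ((SetLike.le_def.mp le_sup_right)
        (LieSubmodule.lie_mem_lie hn (LieSubmodule.lie_mem_lie hy hm)))
  · simp
  · intro u v _ _ hu hv; rw [add_lie]; exact add_mem hu hv
  · intro t u _ hu; rw [smul_lie]; exact Submodule.smul_mem _ _ hu

private lemma lcs_lie_lcs_le {F L : Type*} [Field F] [LieRing L] [LieAlgebra F L] :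
    ∀ (k l : ℕ), ⁅lowerCentralSeries F L L k, lowerCentralSeries F L L l⁆ ≤
      lowerCentralSeries F L L (k + l + 1)
  | 0, l => by
    rw [LieModule.lowerCentralSeries_zero, ← LieModule.lowerCentralSeries_succ]
    simp
  | (k+1), l => by
    rw [LieModule.lowerCentralSeries_succ]
    refine le_trans (lie_lie_le_aux _ _ _) (sup_le ?_ ?_)
    · refine le_trans (LieSubmodule.mono_lie_right _ (lcs_lie_lcs_le k l)) ?_
      rw [← LieModule.lowerCentralSeries_succ]
      exact antitone_lowerCentralSeries F L L (by omega)
    · refine le_trans (LieSubmodule.mono_lie_right _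
        (le_of_eq (LieModule.lowerCentralSeries_succ F L L l).symm)) ?_
      exact le_trans (lcs_lie_lcs_le k (l+1)) (antitone_lowerCentralSeries F L L (by omega))

/-- Let `n` be a finite-dimensional nilpotent Lie algebra over a field of
characteristic zero with `nᵖ = 0` for some `p ≥ 4`. If `[n^{p-3}, n²] ≠ 0`, then
`n` admits a local automorphism which is not an automorphism. -/
theorem stmt_16 (F : Type*) [Field F] [CharZero F]
    (L : Type*) [LieRing L] [LieAlgebra F L] [Module.Finite F L]
    (p : ℕ) (hp : 4 ≤ p)
    (hnil : LieModule.lowerCentralSeries F L L (p - 1) = ⊥)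
    (hbr : ⁅LieModule.lowerCentralSeries F L L (p - 4),
           LieModule.lowerCentralSeries F L L 1⁆ ≠ (⊥ : LieSubmodule F L L)) :
    ∃ T : L →ₗ[F] L,
      (∀ x : L, ∃ φ : L ≃ₗ⁅F⁆ L, T x = φ x) ∧
      ¬ (Function.Bijective T ∧ ∀ x y : L, T ⁅x, y⁆ = ⁅T x, T y⁆) := by
  set C : ℕ → LieSubmodule F L L := lowerCentralSeries F L L with hC
  have hzero : ∀ {k : ℕ}, p - 1 ≤ k → ∀ {w : L}, w ∈ C k → w = 0 := by
    intro k hk w hw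
    have h1 : w ∈ C (p - 1) := antitone_lowerCentralSeries F L L hk hw
    rw [hnil] at h1
    simpa using h1
  obtain ⟨a, ha, m, hm, ham⟩ :
      ∃ a ∈ C (p - 4), ∃ m ∈ C 1, ⁅a, m⁆ ≠ 0 := by
    by_contra h
    push_neg at h
    refine hbr (le_bot_iff.mp ?_)
    rw [LieSubmodule.lie_le_iff]
    intro x hx n hn
    rw [h x hx n hn]
    simp
  have hcent : ∀ {z : L}, z ∈ C (p - 2) → ∀ y : L, ⁅y, z⁆ = 0 := by
    intro z hz y
    refine hzero (k := p - 2 + 1) (by omega) ?_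
    rw [hC, LieModule.lowerCentralSeries_succ]
    exact LieSubmodule.lie_mem_lie (LieSubmodule.mem_top _) hz
  have hcent' : ∀ {z : L}, z ∈ C (p - 2) → ∀ y : L, ⁅z, y⁆ = 0 := by
    intro z hz y
    rw [← lie_skew, hcent hz y, neg_zero]
  have hbr1 : ∀ {u : L}, u ∈ C 1 → ⁅a, u⁆ ∈ C (p - 2) := by
    intro u hu
    have h1 : ⁅a, u⁆ ∈ (⁅C (p-4), C 1⁆ : LieSubmodule F L L) :=
      LieSubmodule.lie_mem_lie ha hu
    exact antitone_lowerCentralSeries F L L (by omega) (lcs_lie_lcs_le (p-4) 1 h1)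
  have hbr0 : ∀ (y : L), ⁅a, y⁆ ∈ C (p - 3) := by
    intro y
    have h1 : ⁅a, y⁆ ∈ (⁅C (p-4), C 0⁆ : LieSubmodule F L L) :=
      LieSubmodule.lie_mem_lie ha
        (by rw [hC, LieModule.lowerCentralSeries_zero]; exact LieSubmodule.mem_top _)
    exact antitone_lowerCentralSeries F L L (by omega) (lcs_lie_lcs_le (p-4) 0 h1)
  have hNN : ∀ (y y' : L), ⁅⁅a, y⁆, ⁅a, y'⁆⁆ = 0 := by
    intro y y'
    refine hzero (k := (p-3) + (p-3) + 1) (by omega) ?_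
    exact lcs_lie_lcs_le (p-3) (p-3) (LieSubmodule.lie_mem_lie (hbr0 y) (hbr0 y'))
  have hN2mem : ∀ (y : L), ⁅a, ⁅a, y⁆⁆ ∈ C (p - 2) := by
    intro y
    have h1 := lcs_lie_lcs_le (F := F) (L := L) (p-4) (p-3)
      (LieSubmodule.lie_mem_lie ha (hbr0 y))
    exact antitone_lowerCentralSeries F L L (by omega) h1
  have hN3 : ∀ (y : L), ⁅a, ⁅a, ⁅a, y⁆⁆⁆ = 0 := fun y => hcent (hN2mem y) a
  have hbrC1 : ∀ (x y : L), ⁅x, y⁆ ∈ C 1 := by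
    intro x y
    rw [hC, LieModule.lowerCentralSeries_succ]
    exact LieSubmodule.lie_mem_lie (LieSubmodule.mem_top _)
      (by rw [LieModule.lowerCentralSeries_zero]; exact LieSubmodule.mem_top _)
  have h2inv : ((2:F)⁻¹ + (2:F)⁻¹) = 1 := by
    rw [← two_mul]
    exact mul_inv_cancel₀ two_ne_zero
  -- projection onto C 1
  obtain ⟨W, hW⟩ := Submodule.exists_isCompl ((C 1 : LieSubmodule F L L) : Submodule F L)
  set π : L →ₗ[F] L :=
    ((C 1 : LieSubmodule F L L) : Submodule F L).subtype ∘ₗ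
      Submodule.projectionOnto _ W hW with hπ
  have hπmem : ∀ y : L, π y ∈ C 1 := fun y =>
    ((Submodule.projectionOnto _ W hW) y).2
  have hπid : ∀ {y : L}, y ∈ C 1 → π y = y := by
    intro y hy
    have h1 := Submodule.projectionOnto_apply_left hW ⟨y, hy⟩
    exact congrArg (Subtype.val) h1
  set T : L →ₗ[F] L := LinearMap.id + (LieAlgebra.ad F L a) ∘ₗ π with hT
  have hTapp : ∀ y : L, T y = y + ⁅a, π y⁆ := by
    intro y
    simp [hT, LieAlgebra.ad_apply]
  refine ⟨T, ?_, ?_⟩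
  · intro x
    by_cases hx : x ∈ C 1
    · -- use (truncated) exp(ad a)
      refine ⟨{ toFun := fun y => y + ⁅a, y⁆ + (2:F)⁻¹ • ⁅a, ⁅a, y⁆⁆
                map_add' := by intro y z; simp only [lie_add, smul_add]; abel
                map_smul' := by
                  intro t y
                  simp only [lie_smul, RingHom.id_apply, smul_add, smul_comm t]
                map_lie' := by
                  intro y z
                  have hA : ⁅a, ⁅a, ⁅y, z⁆⁆⁆ = 0 := hcent (hbr1 (hbrC1 y z)) a
                  have hL : ⁅a, ⁅y, z⁆⁆ = ⁅⁅a, y⁆, z⁆ + ⁅y, ⁅a, z⁆⁆ := leibniz_lie a y z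
                  simp only [add_lie, lie_add, lie_smul, smul_lie, hNN, hA,
                    hcent (hN2mem z), hcent' (hN2mem y), hL, smul_zero, add_zero, zero_add]
                  rw [← lie_add, ← hL, hA, smul_zero, add_zero, hL]
                  abel
                invFun := fun y => y - ⁅a, y⁆ + (2:F)⁻¹ • ⁅a, ⁅a, y⁆⁆
                left_inv := by
                  intro y
                  simp only [lie_add, lie_sub, lie_smul, hN3, lie_zero, smul_zero,
                    add_zero, sub_zero, zero_add]
                  match_scalars <;> linear_combination h2inv
                right_inv := by
                  intro y
                  simp only [lie_add, lie_sub, lie_smul, hN3, lie_zero, smul_zero,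
                    add_zero, sub_zero, zero_add]
                  match_scalars <;> linear_combination h2inv }, ?_⟩
      have hx2 : ⁅a, ⁅a, x⁆⁆ = 0 := hcent (hbr1 hx) a
      rw [hTapp x, hπid hx]
      show x + ⁅a, x⁆ = x + ⁅a, x⁆ + (2:F)⁻¹ • ⁅a, ⁅a, x⁆⁆
      rw [hx2, smul_zero, add_zero]
    · -- x ∉ C 1 : shift by a central element using a dual functional
      set z : L := ⁅a, π x⁆ with hz
      have hz2 : z ∈ C (p - 2) := hbr1 (hπmem x)
      have hz1 : z ∈ C 1 := antitone_lowerCentralSeries F L L (by omega) hz2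
      have hxq : (Submodule.Quotient.mk x :
          L ⧸ ((C 1 : LieSubmodule F L L) : Submodule F L)) ≠ 0 := by
        rw [Ne, Submodule.Quotient.mk_eq_zero]; exact hx
      obtain ⟨f, hf⟩ : ∃ f : Module.Dual F (L ⧸ ((C 1 : LieSubmodule F L L) : Submodule F L)),
          f (Submodule.Quotient.mk x) ≠ 0 := by
        by_contra h
        push_neg at h
        exact hxq ((Module.forall_dual_apply_eq_zero_iff F _).mp h)
      set g : L →ₗ[F] F :=
        (f (Submodule.Quotient.mk x))⁻¹ •
          (f ∘ₗ ((C 1 : LieSubmodule F L L) : Submodule F L).mkQ) with hg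
      have hgC1 : ∀ {w : L}, w ∈ C 1 → g w = 0 := by
        intro w hw
        simp [hg, (Submodule.Quotient.mk_eq_zero _).mpr hw]
        right; exact (congrArg f ((Submodule.Quotient.mk_eq_zero _).mpr hw)).trans (map_zero f)
      have hgx : g x = 1 := by
        simp only [hg, LinearMap.smul_apply, LinearMap.coe_comp, Function.comp_apply,
          Submodule.mkQ_apply, smul_eq_mul]
        exact inv_mul_cancel₀ hf
      have hgz : g z = 0 := hgC1 hz1
      refine ⟨{ toFun := fun y => y + g y • z
                map_add' := by intro y y'; simp [add_smul]; abel
                map_smul' := by intro t y; simp [smul_smul, smul_add]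
                map_lie' := by
                  intro y y'
                  simp only [hgC1 (hbrC1 y y'), zero_smul, add_zero, lie_add, add_lie,
                    lie_smul, smul_lie, hcent hz2, hcent' hz2, smul_zero, add_zero]
                invFun := fun y => y - g y • z
                left_inv := by
                  intro y
                  simp only [map_add, map_sub, map_smul, hgz, smul_eq_mul, mul_zero,
                    add_zero, sub_zero]
                  module
                right_inv := by
                  intro y
                  simp only [map_add, map_sub, map_smul, hgz, smul_eq_mul, mul_zero,
                    add_zero, sub_zero]
                  module }, ?_⟩
      show T x = x + g x • z
      rw [hTapp x, hgx, one_smul, hz]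
  · rintro ⟨-, hmul⟩
    have key : ∀ u v : L, ⁅a, ⁅u, v⁆⁆ = 0 := by
      intro u v
      have h1 := hmul u v
      rw [hTapp, hTapp, hTapp, hπid (hbrC1 u v)] at h1
      rw [lie_add, add_lie, add_lie, hcent (hbr1 (hπmem v)), hcent' (hbr1 (hπmem u)),
        hcent' (hbr1 (hπmem u)), add_zero, add_zero, add_zero] at h1
      exact (add_eq_left).mp h1
    have hma : ⁅a, m⁆ = 0 := by
      have hm1 : m ∈ (⁅(⊤ : LieIdeal F L), (⊤ : LieSubmodule F L L)⁆ : LieSubmodule F L L) := by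
        have hCeq : C 1 = ⁅(⊤ : LieIdeal F L), (⊤ : LieSubmodule F L L)⁆ := by
          rw [hC, LieModule.lowerCentralSeries_succ, LieModule.lowerCentralSeries_zero]
        rw [← hCeq]
        exact hm
      have hm2 : m ∈ (Submodule.span F
          {w | ∃ u ∈ (⊤ : LieIdeal F L), ∃ v ∈ (⊤ : LieSubmodule F L L), ⁅u, v⁆ = w}) := by
        rw [← LieSubmodule.lieIdeal_oper_eq_linear_span']
        exact hm1
      refine Submodule.span_induction ?_ ?_ ?_ ?_ hm2
      · rintro w ⟨u, -, v, -, rfl⟩; exact key u v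
      · simp
      · intro u v _ _ h1 h2; rw [lie_add, h1, h2, add_zero]
      · intro t u _ h1; rw [lie_smul, h1, smul_zero]
    exact ham hma
end

section
/- Let n be a finite-dimensional nilpotent Lie algebra over a field F of characteristic zero with nilindex 4, i.e., n^4 = 0 and n^3 ≠ 0. Then n admits a local automorphism which is not an automorphism. -/
section Aux

variable {F : Type*} [Field F] [CharZero F]
  {L : Type*} [LieRing L] [LieAlgebra F L]

theorem aux_mem_lcs1 (r s : L) : ⁅r, s⁆ ∈ LieModule.lowerCentralSeries F L L 1 := by
  rw [LieModule.lowerCentralSeries_succ]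
  exact LieSubmodule.lie_mem_lie (LieSubmodule.mem_top _) (LieSubmodule.mem_top _)

theorem aux_triple0 (hnil : LieModule.lowerCentralSeries F L L 3 = ⊥)
    {z : L} (hz : z ∈ LieModule.lowerCentralSeries F L L 1) (p q : L) :
    ⁅p, ⁅q, z⁆⁆ = 0 := by
  have h2 : ⁅q, z⁆ ∈ LieModule.lowerCentralSeries F L L 2 := by
    rw [LieModule.lowerCentralSeries_succ]
    exact LieSubmodule.lie_mem_lie (LieSubmodule.mem_top _) hz
  have h3 : ⁅p, ⁅q, z⁆⁆ ∈ LieModule.lowerCentralSeries F L L 3 := by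
    rw [LieModule.lowerCentralSeries_succ]
    exact LieSubmodule.lie_mem_lie (LieSubmodule.mem_top _) h2
  rw [hnil] at h3
  exact (LieSubmodule.mem_bot _).1 h3

theorem aux_quad (hnil : LieModule.lowerCentralSeries F L L 3 = ⊥)
    (p q r s : L) : ⁅p, ⁅q, ⁅r, s⁆⁆⁆ = 0 :=
  aux_triple0 hnil (aux_mem_lcs1 r s) p q

theorem aux_half (m : L) : m = (2⁻¹ : F) • m + (2⁻¹ : F) • m := by
  rw [← add_smul]
  norm_num

/-- exp(ad a) as an automorphism. -/
theorem aux_exists_exp (hnil : LieModule.lowerCentralSeries F L L 3 = ⊥) (a : L) :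
    ∃ φ : L ≃ₗ⁅F⁆ L, ∀ x : L, φ x = x + ⁅a, x⁆ + (2⁻¹ : F) • ⁅a, ⁅a, x⁆⁆ := by
  have quad : ∀ p q r s : L, ⁅p, ⁅q, ⁅r, s⁆⁆⁆ = 0 := aux_quad hnil
  have quad' : ∀ p q r s : L, ⁅⁅q, ⁅r, s⁆⁆, p⁆ = 0 := fun p q r s => by
    rw [← lie_skew, quad, neg_zero]
  have hbb : ∀ p q r s : L, ⁅⁅p, q⁆, ⁅r, s⁆⁆ = 0 := fun p q r s => by
    rw [lie_lie, quad, quad, sub_zero]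
  set A := LieAlgebra.ad F L a with hA
  let f : L →ₗ[F] L := LinearMap.id + A + (2⁻¹ : F) • (A ∘ₗ A)
  let g : L →ₗ[F] L := LinearMap.id - A + (2⁻¹ : F) • (A ∘ₗ A)
  have hf : ∀ x, f x = x + ⁅a, x⁆ + (2⁻¹ : F) • ⁅a, ⁅a, x⁆⁆ := fun x => by
    simp [f, hA, LieAlgebra.ad_apply]
  have hg : ∀ x, g x = x - ⁅a, x⁆ + (2⁻¹ : F) • ⁅a, ⁅a, x⁆⁆ := fun x => by
    simp [g, hA, LieAlgebra.ad_apply]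
  have hgf : ∀ x, g (f x) = x := by
    intro x
    rw [hf, hg]
    simp only [lie_add, lie_sub, lie_smul, quad, smul_zero, add_zero, sub_zero, smul_add,
      smul_sub, zero_add]
    match_scalars <;> norm_num
  have hfg : ∀ x, f (g x) = x := by
    intro x
    rw [hg, hf]
    simp only [lie_sub, lie_add, lie_smul, quad, smul_zero, add_zero, sub_zero, smul_add,
      smul_sub, zero_add]
    match_scalars <;> norm_num
  have hmaplie : ∀ x y : L, f ⁅x, y⁆ = ⁅f x, f y⁆ := by
    intro x y
    have e1 : ⁅a, ⁅x, y⁆⁆ = ⁅⁅a, x⁆, y⁆ + ⁅x, ⁅a, y⁆⁆ := leibniz_lie a x y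
    have e2a : ⁅a, ⁅⁅a, x⁆, y⁆⁆ = ⁅⁅a, ⁅a, x⁆⁆, y⁆ + ⁅⁅a, x⁆, ⁅a, y⁆⁆ := leibniz_lie a ⁅a, x⁆ y
    have e2b : ⁅a, ⁅x, ⁅a, y⁆⁆⁆ = ⁅⁅a, x⁆, ⁅a, y⁆⁆ + ⁅x, ⁅a, ⁅a, y⁆⁆⁆ := leibniz_lie a x ⁅a, y⁆
    rw [hf, hf, hf]
    simp only [lie_add, add_lie, lie_smul, smul_lie, quad, quad', hbb, smul_zero, zero_smul,
      add_zero, zero_add, e1, e2a, e2b, smul_add]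
    match_scalars <;> norm_num
  refine ⟨{ toLinearMap := f, map_lie' := fun {x y} => hmaplie x y,
            invFun := g, left_inv := hgf, right_inv := hfg }, fun x => hf x⟩

end Aux

/-- Every finite-dimensional nilpotent Lie algebra of nilindex 4 over a field of
characteristic zero admits a local automorphism which is not an automorphism. -/
theorem stmt_17 (F : Type*) [Field F] [CharZero F]
    (L : Type*) [LieRing L] [LieAlgebra F L] [Module.Finite F L]
    (hnil : LieModule.lowerCentralSeries F L L 3 = ⊥)
    (hnil' : LieModule.lowerCentralSeries F L L 2 ≠ ⊥) :
    ∃ T : L →ₗ[F] L,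
      (∀ x : L, ∃ φ : L ≃ₗ⁅F⁆ L, T x = φ x) ∧
      ¬ (Function.Bijective T ∧ ∀ x y : L, T ⁅x, y⁆ = ⁅T x, T y⁆) := by
  classical
  set N : Submodule F L := LieSubmodule.toSubmodule (LieModule.lowerCentralSeries F L L 1)
    with hNdef
  obtain ⟨C, hC⟩ := N.exists_isCompl
  let π : L →ₗ[F] L := N.subtype ∘ₗ (N.linearProjOfIsCompl C hC)
  have hπmem : ∀ x : L, π x ∈ LieModule.lowerCentralSeries F L L 1 := by
    intro x
    exact ((N.linearProjOfIsCompl C hC) x).2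
  have hπid : ∀ y ∈ N, π y = y := by
    intro y hy
    show (N.subtype) ((N.projectionOnto C hC) y) = y
    rw [show y = ((⟨y, hy⟩ : N) : L) from rfl, Submodule.linearProjOfIsCompl_apply_left hC]
    rfl
  -- existence of a nonzero triple bracket
  have hex : ∃ a u v : L, ⁅a, ⁅u, v⁆⁆ ≠ 0 := by
    by_contra hcon
    push_neg at hcon
    apply hnil'
    have key : ∀ x : L, ∀ n ∈ LieModule.lowerCentralSeries F L L 1, ⁅x, n⁆ = 0 := by
      intro x n hn
      rw [LieModule.lowerCentralSeries_succ, LieModule.lowerCentralSeries_zero] at hn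
      have hn' : n ∈ Submodule.span F {m : L | ∃ y ∈ (⊤ : LieIdeal F L),
          ∃ z ∈ (⊤ : LieSubmodule F L L), ⁅y, z⁆ = m} := by
        rw [← LieSubmodule.lieIdeal_oper_eq_linear_span']
        exact hn
      refine Submodule.span_induction ?_ ?_ ?_ ?_ hn'
      · rintro m ⟨u, -, v, -, rfl⟩
        exact hcon x u v
      · exact lie_zero x
      · intro m₁ m₂ _ _ h₁ h₂
        rw [lie_add, h₁, h₂, add_zero]
      · intro t m _ h
        rw [lie_smul, h, smul_zero]
    rw [LieSubmodule.eq_bot_iff]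
    intro m hm
    rw [show (2 : ℕ) = 1 + 1 from rfl, LieModule.lowerCentralSeries_succ] at hm
    have hm' : m ∈ Submodule.span F {m : L | ∃ y ∈ (⊤ : LieIdeal F L),
        ∃ z ∈ LieModule.lowerCentralSeries F L L 1, ⁅y, z⁆ = m} := by
      rw [← LieSubmodule.lieIdeal_oper_eq_linear_span']
      exact hm
    refine Submodule.span_induction ?_ ?_ ?_ ?_ hm'
    · rintro m ⟨u, -, z, hz, rfl⟩
      exact key u z hz
    · rfl
    · intro m₁ m₂ _ _ h₁ h₂
      rw [h₁, h₂, add_zero]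
    · intro t m _ h
      rw [h, smul_zero]
  obtain ⟨a, u, v, huv⟩ := hex
  have triple0 : ∀ (z : L), z ∈ LieModule.lowerCentralSeries F L L 1 →
      ∀ p q : L, ⁅p, ⁅q, z⁆⁆ = 0 := fun z hz => aux_triple0 hnil hz
  set T : L →ₗ[F] L := LinearMap.id + (LieAlgebra.ad F L a : L →ₗ[F] L) ∘ₗ π with hTdef
  have hTx : ∀ x : L, T x = x + ⁅a, π x⁆ := by
    intro x
    simp [hTdef, LieAlgebra.ad_apply]
  refine ⟨T, ?_, ?_⟩
  · -- local automorphism property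
    intro x
    by_cases hx : x ∈ N
    · obtain ⟨φ, hφ⟩ := aux_exists_exp (F := F) hnil a
      refine ⟨φ, ?_⟩
      rw [hTx x, hφ, hπid x hx]
      have : ⁅a, ⁅a, x⁆⁆ = 0 := by
        have hx1 : x ∈ LieModule.lowerCentralSeries F L L 1 := hx
        exact triple0 x hx1 a a
      rw [this, smul_zero, add_zero]
    · -- x ∉ N : use a unipotent automorphism id + λ(·) • z'
      obtain ⟨f, hfx, hfN⟩ := Submodule.exists_dual_map_eq_bot_of_notMem hx inferInstance
      set lam : L →ₗ[F] F := (f x)⁻¹ • f with hlam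
      have hlamx : lam x = 1 := by
        simp [hlam, inv_mul_cancel₀ hfx]
      have hlamN : ∀ n ∈ N, lam n = 0 := by
        intro n hn
        have : f n ∈ N.map f := Submodule.mem_map_of_mem hn
        rw [hfN] at this
        simp only [hlam, LinearMap.smul_apply, smul_eq_mul]
        rw [(Submodule.mem_bot F).1 this, mul_zero]
      set z' : L := ⁅a, π x⁆ with hz'
      have hz'mem : z' ∈ LieModule.lowerCentralSeries F L L 1 := aux_mem_lcs1 a (π x)
      have hz'N : z' ∈ N := hz'mem
      have hcentral : ∀ w : L, ⁅w, z'⁆ = 0 := by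
        intro w
        exact triple0 (π x) (hπmem x) w a
      have hcentral' : ∀ w : L, ⁅z', w⁆ = 0 := by
        intro w
        rw [← lie_skew, hcentral, neg_zero]
      let D : L →ₗ[F] L := LinearMap.smulRight lam z'
      have hD : ∀ w, D w = lam w • z' := fun w => rfl
      have hDD : ∀ w, D (D w) = 0 := by
        intro w
        rw [hD, hD, LinearMap.map_smul, hlamN z' hz'N, smul_zero, zero_smul]
      refine ⟨{ toLinearMap := LinearMap.id + D,
                map_lie' := ?_,
                invFun := fun w => w - D w,
                left_inv := ?_, right_inv := ?_ }, ?_⟩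
      · intro p q
        show ⁅p, q⁆ + D ⁅p, q⁆ = ⁅p + D p, q + D q⁆
        have hbr : D ⁅p, q⁆ = 0 := by
          rw [hD, hlamN _ (aux_mem_lcs1 p q), zero_smul]
        rw [hbr, add_zero]
        simp only [lie_add, add_lie, hD, lie_smul, smul_lie, hcentral, hcentral', smul_zero,
          add_zero, zero_add]
      · intro w
        show (w + D w) - D (w + D w) = w
        rw [map_add, hDD, add_zero]
        abel
      · intro w
        show (w - D w) + D (w - D w) = w
        rw [map_sub, hDD, sub_zero]
        abel
      · show T x = x + D x
        rw [hTx x, hD, hlamx, one_smul]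
  · -- not an automorphism
    rintro ⟨-, hmul⟩
    have h1 : T ⁅u, v⁆ = ⁅u, v⁆ + ⁅a, ⁅u, v⁆⁆ := by
      rw [hTx ⁅u, v⁆, hπid _ (aux_mem_lcs1 u v)]
    have h3 := hmul u v
    rw [h1, hTx u, hTx v] at h3
    rw [lie_add, add_lie, add_lie] at h3
    have z1 : ⁅u, ⁅a, π v⁆⁆ = 0 := triple0 (π v) (hπmem v) u a
    have z2 : ⁅⁅a, π u⁆, v⁆ = 0 := by
      rw [← lie_skew, triple0 (π u) (hπmem u) v a, neg_zero]
    have z3 : ⁅⁅a, π u⁆, ⁅a, π v⁆⁆ = 0 := by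
      rw [← lie_skew, triple0 (π u) (hπmem u) _ a, neg_zero]
    rw [z1, z2, z3, add_zero, add_zero, add_zero] at h3
    rw [add_eq_left] at h3
    exact huv h3
end

section
/- Let n be a finite-dimensional non-abelian nilpotent Lie algebra over a field F of characteristic zero which is generated (as a Lie algebra) by two elements. Then n admits a local automorphism which is not an automorphism. -/
/-!
Pick generators `x, y` of `L`. Nilpotency forces `x, y` to be independent modulo `[L, L]` and
`⁅x, y⁆ ∉ [L, [L, L]]`, so there are functionals `f, g` vanishing on `[L, L]` that are dual to
`x, y`, and a functional `ξ` with `ξ ⁅a, b⁆ = f a g b - g a f b`. Since `L` is nilpotent and not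
abelian, some `u` lies in the second center but not in the center; say `w = ⁅u, y⁆ ≠ 0`, which is
central. Then `T = id + ξ ⊗ w` is not an automorphism, as `T ⁅x, y⁆ = ⁅x, y⁆ + w` while
`⁅T x, T y⁆ = ⁅x, y⁆`. It is a local automorphism: where `f a ≠ 0` it agrees at `a` with the
automorphism `id + (ξ a / f a) f ⊗ w`, and where `f a = 0` with `id + f ⊗ u + ξ ⊗ w`. The latter is
a Lie homomorphism because `f ⊗ u + ξ ⊗ w` is a derivation with abelian image, and it is invertible
once `f u ≠ -1`, which replacing `u` by `-u` achieves in characteristic `≠ 2`.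
-/

open LieModule

theorem Submodule.exists_dual_eq_one_of_notMem {K V : Type*} [Field K] [AddCommGroup V]
    [Module K V] {p : Submodule K V} {v : V} (hv : v ∉ p) :
    ∃ f : Module.Dual K V, f v = 1 ∧ ∀ u ∈ p, f u = 0 := by
  have hv' : p.mkQ v ≠ 0 := by simpa [Submodule.Quotient.mk_eq_zero] using hv
  obtain ⟨f, hf⟩ := Module.Projective.exists_dual_eq_one K hv'
  exact ⟨f.comp p.mkQ, hf, fun u hu => by simp [(Submodule.Quotient.mk_eq_zero p).mpr hu]⟩

namespace LieModule

variable {R L M : Type*} [CommRing R] [LieRing L] [LieAlgebra R L] [AddCommGroup M]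
  [Module R M] [LieRingModule L M]

theorem lie_mem_lowerCentralSeries_succ (x : L) {m : M} {k : ℕ}
    (hm : m ∈ lowerCentralSeries R L M k) : ⁅x, m⁆ ∈ lowerCentralSeries R L M (k + 1) := by
  rw [lowerCentralSeries_succ]
  exact LieSubmodule.lie_mem_lie (LieSubmodule.mem_top x) hm

theorem lie_mem_lowerCentralSeries_one (x : L) (m : M) :
    ⁅x, m⁆ ∈ lowerCentralSeries R L M 1 :=
  lie_mem_lowerCentralSeries_succ x (LieSubmodule.mem_top m)

variable [LieModule R L M]

theorem lowerCentralSeries_one_le_of_forall_lie_mem {S : Submodule R M}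
    (h : ∀ (x : L) (m : M), ⁅x, m⁆ ∈ S) : (lowerCentralSeries R L M 1).toSubmodule ≤ S := by
  rw [lowerCentralSeries_succ, lowerCentralSeries_zero,
    LieSubmodule.lieIdeal_oper_eq_linear_span', Submodule.span_le]
  rintro _ ⟨x, -, m, -, rfl⟩
  exact h x m

theorem lowerCentralSeries_one_not_le_two [IsNilpotent L M] (h : ¬ IsTrivial L M) :
    ¬ lowerCentralSeries R L M 1 ≤ lowerCentralSeries R L M 2 := by
  intro hle
  have hstable : ∀ k, lowerCentralSeries R L M 1 ≤ lowerCentralSeries R L M (k + 1) := by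
    intro k
    induction k with
    | zero => exact le_rfl
    | succ k ih =>
      calc lowerCentralSeries R L M 1 ≤ lowerCentralSeries R L M 2 := hle
        _ ≤ lowerCentralSeries R L M (k + 2) := by
          rw [lowerCentralSeries_succ R L M 1, lowerCentralSeries_succ R L M (k + 1)]
          exact LieSubmodule.mono_lie_right _ ih
  obtain ⟨k, hk⟩ := IsNilpotent.nilpotent R L M
  apply h
  rw [trivial_iff_lower_central_eq_bot (R := R), eq_bot_iff, ← hk]
  exact (hstable k).trans (antitone_lowerCentralSeries R L M k.le_succ)

theorem maxTrivSubmodule_lt_normalizer [IsNilpotent L M] (h : ¬ IsTrivial L M) :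
    maxTrivSubmodule R L M < (maxTrivSubmodule R L M).normalizer := by
  refine lt_of_le_of_ne (LieSubmodule.le_normalizer _) fun heq => h ?_
  obtain ⟨k, hk⟩ := (isNilpotent_iff_exists_ucs_eq_top R).mp ‹IsNilpotent L M›
  rw [isTrivial_iff_max_triv_eq_top R L M, eq_top_iff, ← hk]
  exact LieSubmodule.ucs_le_of_normalizer_eq_self heq.symm k

end LieModule

namespace LieAlgebra

variable {F L : Type*} [Field F] [LieRing L] [LieAlgebra F L]

def IsLocalAutomorphism (T : L →ₗ[F] L) : Prop :=
  ∀ x : L, ∃ φ : L ≃ₗ⁅F⁆ L, T x = φ x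

theorem lie_lie_eq_zero_of_mem_normalizer_center {u : L} (hu : u ∈ (center F L).normalizer)
    (a b : L) : ⁅b, ⁅u, a⁆⁆ = 0 := by
  rw [← lie_skew u a, lie_neg,
    (mem_maxTrivSubmodule F L L _).mp ((LieSubmodule.mem_normalizer _ _).mp hu a) b, neg_zero]

theorem lie_eq_zero_of_mem_normalizer_center {u n : L} (hu : u ∈ (center F L).normalizer)
    (hn : n ∈ lowerCentralSeries F L L 1) : ⁅u, n⁆ = 0 := by
  have hle : (lowerCentralSeries F L L 1).toSubmodule ≤ LinearMap.ker (ad F L u) :=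
    lowerCentralSeries_one_le_of_forall_lie_mem fun a b => by
      rw [LinearMap.mem_ker, ad_apply, leibniz_lie,
        lie_lie_eq_zero_of_mem_normalizer_center hu b a, ← lie_skew,
        lie_lie_eq_zero_of_mem_normalizer_center hu a b, neg_zero, add_zero]
  simpa using hle hn

theorem lie_sub_lie_mem_lowerCentralSeries_two {a a' b b' : L}
    (ha : a - a' ∈ lowerCentralSeries F L L 1) (hb : b - b' ∈ lowerCentralSeries F L L 1) :
    ⁅a, b⁆ - ⁅a', b'⁆ ∈ lowerCentralSeries F L L 2 := by
  have h : ⁅a, b⁆ - ⁅a', b'⁆ = ⁅a - a', b⁆ + ⁅a', b - b'⁆ := by rw [sub_lie, lie_sub]; abel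
  rw [h, ← lie_skew (a - a') b]
  exact add_mem (neg_mem (lie_mem_lowerCentralSeries_succ b ha))
    (lie_mem_lowerCentralSeries_succ a' hb)

theorem span_sup_lowerCentralSeries_eq_top {s : Set L} (hs : LieSubalgebra.lieSpan F L s = ⊤) :
    Submodule.span F s ⊔ (lowerCentralSeries F L L 1).toSubmodule = ⊤ := by
  let S : LieSubalgebra F L :=
    { Submodule.span F s ⊔ (lowerCentralSeries F L L 1).toSubmodule with
      lie_mem' := fun {a b} _ _ => Submodule.mem_sup_right (lie_mem_lowerCentralSeries_one a b) }
  have hS : LieSubalgebra.lieSpan F L s ≤ S :=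
    LieSubalgebra.lieSpan_le.mpr fun a ha => Submodule.mem_sup_left (Submodule.subset_span ha)
  rw [hs] at hS
  exact eq_top_iff.mpr fun a _ => hS (LieSubalgebra.mem_top a)

section Nilpotent

variable [IsNilpotent L L]

theorem notMem_span_singleton_sup_lowerCentralSeries (hL : ¬ IsLieAbelian L) {x y : L}
    (hs : LieSubalgebra.lieSpan F L {x, y} = ⊤) :
    x ∉ Submodule.span F {y} ⊔ (lowerCentralSeries F L L 1).toSubmodule := by
  intro hx
  have htop : Submodule.span F {y} ⊔ (lowerCentralSeries F L L 1).toSubmodule = ⊤ := by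
    rw [eq_top_iff, ← span_sup_lowerCentralSeries_eq_top hs]
    refine sup_le (Submodule.span_le.mpr ?_) le_sup_right
    rintro _ (rfl | rfl)
    · exact hx
    · exact Submodule.mem_sup_left (Submodule.mem_span_singleton_self _)
  have hdec : ∀ a : L, ∃ s : F, a - s • y ∈ lowerCentralSeries F L L 1 := fun a => by
    obtain ⟨_, hp, n, hn, h⟩ := Submodule.mem_sup.mp (htop ▸ Submodule.mem_top (x := a))
    obtain ⟨s, rfl⟩ := Submodule.mem_span_singleton.mp hp
    exact ⟨s, by rwa [← h, add_sub_cancel_left]⟩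
  refine lowerCentralSeries_one_not_le_two hL
    ((LieSubmodule.toSubmodule_le_toSubmodule (R := F) _ _).mp
      (lowerCentralSeries_one_le_of_forall_lie_mem fun a b => ?_))
  obtain ⟨s, hs⟩ := hdec a
  obtain ⟨t, ht⟩ := hdec b
  simpa [lie_smul, smul_lie] using lie_sub_lie_mem_lowerCentralSeries_two hs ht

theorem exists_dual_pair_mod_lowerCentralSeries (hL : ¬ IsLieAbelian L) {x y : L}
    (hs : LieSubalgebra.lieSpan F L {x, y} = ⊤) :
    ∃ f g : Module.Dual F L, f x = 1 ∧ f y = 0 ∧ g x = 0 ∧ g y = 1 ∧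
      (∀ a b : L, f ⁅a, b⁆ = 0) ∧ (∀ a b : L, g ⁅a, b⁆ = 0) ∧
      ∀ a, a - (f a • x + g a • y) ∈ lowerCentralSeries F L L 1 := by
  obtain ⟨f, hfx, hf⟩ := Submodule.exists_dual_eq_one_of_notMem
    (notMem_span_singleton_sup_lowerCentralSeries hL hs)
  obtain ⟨g, hgy, hg⟩ := Submodule.exists_dual_eq_one_of_notMem
    (notMem_span_singleton_sup_lowerCentralSeries hL (Set.pair_comm x y ▸ hs))
  have hfy := hf y (Submodule.mem_sup_left (Submodule.mem_span_singleton_self y))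
  have hgx := hg x (Submodule.mem_sup_left (Submodule.mem_span_singleton_self x))
  have hf1 : ∀ n ∈ lowerCentralSeries F L L 1, f n = 0 :=
    fun n hn => hf n (Submodule.mem_sup_right hn)
  have hg1 : ∀ n ∈ lowerCentralSeries F L L 1, g n = 0 :=
    fun n hn => hg n (Submodule.mem_sup_right hn)
  refine ⟨f, g, hfx, hfy, hgx, hgy, fun a b => hf1 _ (lie_mem_lowerCentralSeries_one a b),
    fun a b => hg1 _ (lie_mem_lowerCentralSeries_one a b), fun a => ?_⟩
  obtain ⟨_, hp, n, hn, rfl⟩ :=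
    Submodule.mem_sup.mp (span_sup_lowerCentralSeries_eq_top hs ▸ Submodule.mem_top (x := a))
  obtain ⟨α, β, rfl⟩ := Submodule.mem_span_pair.mp hp
  simpa [hfx, hfy, hgx, hgy, hf1 n hn, hg1 n hn] using hn

theorem exists_dual_lie_eq (hL : ¬ IsLieAbelian L) {x y : L} {f g : Module.Dual F L}
    (hdec : ∀ a, a - (f a • x + g a • y) ∈ lowerCentralSeries F L L 1) :
    ∃ ξ : Module.Dual F L, ∀ a b, ξ ⁅a, b⁆ = f a * g b - g a * f b := by
  have hbr : ∀ a b : L,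
      ⁅a, b⁆ - (f a * g b - g a * f b) • ⁅x, y⁆ ∈ lowerCentralSeries F L L 2 := by
    intro a b
    have e : ⁅f a • x + g a • y, f b • x + g b • y⁆ = (f a * g b - g a * f b) • ⁅x, y⁆ := by
      simp only [lie_add, add_lie, lie_smul, smul_lie, lie_self, ← lie_skew x y]
      module
    simpa [e] using lie_sub_lie_mem_lowerCentralSeries_two (hdec a) (hdec b)
  have hq : ⁅x, y⁆ ∉ lowerCentralSeries F L L 2 := fun hq =>
    lowerCentralSeries_one_not_le_two hL
      ((LieSubmodule.toSubmodule_le_toSubmodule (R := F) _ _).mp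
        (lowerCentralSeries_one_le_of_forall_lie_mem fun a b => by
          simpa using add_mem (hbr a b) (Submodule.smul_mem _ (f a * g b - g a * f b) hq)))
  obtain ⟨ξ, hξq, hξ⟩ := Submodule.exists_dual_eq_one_of_notMem hq
  refine ⟨ξ, fun a b => ?_⟩
  have h := hξ _ (hbr a b)
  rwa [map_sub, map_smul, hξq, smul_eq_mul, mul_one, sub_eq_zero] at h

end Nilpotent

variable [Module.Finite F L]

theorem exists_lieEquiv_apply_eq_add_of_derivation (D : L →ₗ[F] L)
    (hD : ∀ a b, D ⁅a, b⁆ = ⁅D a, b⁆ + ⁅a, D b⁆) (hDD : ∀ a b, ⁅D a, D b⁆ = 0)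
    (hinj : ∀ a, a + D a = 0 → a = 0) :
    ∃ φ : L ≃ₗ⁅F⁆ L, ∀ a, φ a = a + D a := by
  let ψ : L →ₗ⁅F⁆ L :=
    { LinearMap.id + D with
      map_lie' := fun {a b} => by
        simp only [LinearMap.toFun_eq_coe, LinearMap.add_apply, LinearMap.id_apply, hD, add_lie,
          lie_add, hDD]
        abel }
  have hψ : Function.Injective ψ := (injective_iff_map_eq_zero ψ).mpr hinj
  have hψ' : Function.Surjective ψ :=
    (LinearMap.injective_iff_surjective (f := ψ.toLinearMap)).mp hψ
  exact ⟨.ofBijective ψ ⟨hψ, hψ'⟩, fun _ => rfl⟩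

theorem exists_lieEquiv_apply_eq_add_smul {η : Module.Dual F L} {w : L}
    (hη : ∀ a b : L, η ⁅a, b⁆ = 0) (hw : ∀ a : L, ⁅a, w⁆ = 0) (hηw : η w = 0) :
    ∃ φ : L ≃ₗ⁅F⁆ L, ∀ a, φ a = a + η a • w := by
  have hw' : ∀ a : L, ⁅w, a⁆ = 0 := fun a => by rw [← lie_skew, hw, neg_zero]
  refine exists_lieEquiv_apply_eq_add_of_derivation (η.smulRight w) (fun a b => ?_)
    (fun a b => ?_) (fun a ha => ?_)
  · simp [hη, hw, hw']
  · simp [hw]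
  · have hηa : η a = 0 := by simpa [hηw] using congrArg η ha
    simpa [hηa] using ha

theorem exists_isLocalAutomorphism_of_one_add_ne_zero {x y u : L} {f g ξ : Module.Dual F L}
    (hfx : f x = 1) (hfy : f y = 0) (hgx : g x = 0) (hgy : g y = 1)
    (hf : ∀ a b : L, f ⁅a, b⁆ = 0) (hξ : ∀ a b : L, ξ ⁅a, b⁆ = f a * g b - g a * f b)
    (hu : ∀ b, ⁅u, b⁆ = f b • ⁅u, x⁆ + g b • ⁅u, y⁆) (hw : ∀ a : L, ⁅a, ⁅u, y⁆⁆ = 0)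
    (hw0 : ⁅u, y⁆ ≠ 0) (hfu : 1 + f u ≠ 0) :
    ∃ T : L →ₗ[F] L, IsLocalAutomorphism T ∧ ∃ a b, T ⁅a, b⁆ ≠ ⁅T a, T b⁆ := by
  set w := ⁅u, y⁆
  have hw' : ∀ a : L, ⁅w, a⁆ = 0 := fun a => by rw [← lie_skew, hw, neg_zero]
  have hfw : f w = 0 := hf u y
  have hξw : ξ w = f u := by rw [hξ, hfy, hgy]; ring
  refine ⟨LinearMap.id + ξ.smulRight w, fun a => ?_, x, y, ?_⟩
  · by_cases ha : f a = 0
    · set D := f.smulRight u + ξ.smulRight w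
      -- both sides of the Leibniz rule reduce to `(f a * g b - g a * f b) • w`
      have hD : ∀ a b, D ⁅a, b⁆ = ⁅D a, b⁆ + ⁅a, D b⁆ := fun a b => by
        simp only [D, LinearMap.add_apply, LinearMap.smulRight_apply, hf, hξ, zero_smul, zero_add,
          add_lie, smul_lie, lie_add, lie_smul, hw, hw', smul_zero, add_zero]
        rw [← lie_skew a u, hu a, hu b]
        module
      have hDD : ∀ a b, ⁅D a, D b⁆ = 0 := fun a b => by simp [D, hw, hw']
      have hinj : ∀ a, a + D a = 0 → a = 0 := fun a ha => by
        have hf' := congrArg f ha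
        have hξ' := congrArg ξ ha
        simp only [D, map_add, LinearMap.add_apply, LinearMap.smulRight_apply, map_smul,
          smul_eq_mul, hfw, hξw, map_zero] at hf' hξ'
        have hfa : f a = 0 :=
          (mul_eq_zero.mp (by linear_combination hf' : f a * (1 + f u) = 0)).resolve_right hfu
        have hξa : ξ a = 0 := (mul_eq_zero.mp
          (by linear_combination hξ' - ξ u * hfa : ξ a * (1 + f u) = 0)).resolve_right hfu
        simpa [D, hfa, hξa] using ha
      obtain ⟨φ, hφ⟩ := exists_lieEquiv_apply_eq_add_of_derivation D hD hDD hinj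
      exact ⟨φ, by simp [hφ, D, ha]⟩
    · obtain ⟨φ, hφ⟩ := exists_lieEquiv_apply_eq_add_smul (η := (ξ a / f a) • f) (w := w)
        (by simp [hf]) hw (by simp [hfw])
      exact ⟨φ, by simp [hφ, div_mul_cancel₀ _ ha]⟩
  · simpa [hξ, hfx, hfy, hgx, hgy, hw, hw'] using hw0

theorem exists_isLocalAutomorphism_of_lie_ne_zero [NeZero (2 : F)] {x y u : L}
    {f g ξ : Module.Dual F L}
    (hfx : f x = 1) (hfy : f y = 0) (hgx : g x = 0) (hgy : g y = 1)
    (hf : ∀ a b : L, f ⁅a, b⁆ = 0) (hξ : ∀ a b : L, ξ ⁅a, b⁆ = f a * g b - g a * f b)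
    (hu : ∀ b, ⁅u, b⁆ = f b • ⁅u, x⁆ + g b • ⁅u, y⁆) (hw : ∀ a : L, ⁅a, ⁅u, y⁆⁆ = 0)
    (hw0 : ⁅u, y⁆ ≠ 0) :
    ∃ T : L →ₗ[F] L, IsLocalAutomorphism T ∧ ∃ a b, T ⁅a, b⁆ ≠ ⁅T a, T b⁆ := by
  by_cases hfu : 1 + f u = 0
  · refine exists_isLocalAutomorphism_of_one_add_ne_zero (u := -u) hfx hfy hgx hgy hf hξ
      (fun b => by rw [neg_lie, neg_lie, neg_lie, hu b]; module)
      (fun a => by rw [neg_lie, lie_neg, hw a, neg_zero]) (by rwa [neg_lie, neg_ne_zero]) ?_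
    rw [map_neg, show f u = -1 by linear_combination hfu, neg_neg, one_add_one_eq_two]
    exact two_ne_zero
  · exact exists_isLocalAutomorphism_of_one_add_ne_zero hfx hfy hgx hgy hf hξ hu hw hw0 hfu

theorem exists_isLocalAutomorphism_of_mem_normalizer_center [NeZero (2 : F)] {x y u : L}
    {f g ξ : Module.Dual F L}
    (hfx : f x = 1) (hfy : f y = 0) (hgx : g x = 0) (hgy : g y = 1)
    (hf : ∀ a b : L, f ⁅a, b⁆ = 0) (hg : ∀ a b : L, g ⁅a, b⁆ = 0)
    (hξ : ∀ a b : L, ξ ⁅a, b⁆ = f a * g b - g a * f b)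
    (hdec : ∀ a, a - (f a • x + g a • y) ∈ lowerCentralSeries F L L 1)
    (hucent : u ∈ (center F L).normalizer) (hunc : u ∉ center F L) :
    ∃ T : L →ₗ[F] L, IsLocalAutomorphism T ∧ ∃ a b, T ⁅a, b⁆ ≠ ⁅T a, T b⁆ := by
  have hu : ∀ b, ⁅u, b⁆ = f b • ⁅u, x⁆ + g b • ⁅u, y⁆ := fun b => by
    have h := lie_eq_zero_of_mem_normalizer_center hucent (hdec b)
    rwa [lie_sub, lie_add, lie_smul, lie_smul, sub_eq_zero] at h
  have hw := lie_lie_eq_zero_of_mem_normalizer_center hucent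
  by_cases hy : ⁅u, y⁆ = 0
  · have hx : ⁅u, x⁆ ≠ 0 := fun hx => hunc fun b => by rw [← lie_skew, hu b, hx, hy]; simp
    refine exists_isLocalAutomorphism_of_lie_ne_zero (ξ := -ξ) hgy hgx hfy hfx hg
      (fun a b => by rw [LinearMap.neg_apply, hξ]; ring) (fun b => by rw [hu b, add_comm])
      (hw x) hx
  · exact exists_isLocalAutomorphism_of_lie_ne_zero hfx hfy hgx hgy hf hξ hu (hw y) hy

end LieAlgebra

/-- Every finite-dimensional non-abelian nilpotent Lie algebra over a field of
characteristic zero which is generated by two elements admits a local automorphism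
which is not an automorphism. -/
theorem stmt_18 (F : Type*) [Field F] [CharZero F]
    (L : Type*) [LieRing L] [LieAlgebra F L] [Module.Finite F L]
    (hnilp : ∃ k : ℕ, LieModule.lowerCentralSeries F L L k = ⊥)
    (hnonab : ∃ x y : L, ⁅x, y⁆ ≠ 0)
    (hgen : ∃ x y : L, LieSubalgebra.lieSpan F L {x, y} = ⊤) :
    ∃ T : L →ₗ[F] L,
      (∀ x : L, ∃ φ : L ≃ₗ⁅F⁆ L, T x = φ x) ∧
      ¬ (Function.Bijective T ∧ ∀ x y : L, T ⁅x, y⁆ = ⁅T x, T y⁆) := by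
  obtain ⟨x, y, hgen⟩ := hgen
  have : LieModule.IsNilpotent L L := (LieModule.isNilpotent_iff F L L).mpr hnilp
  have hL : ¬ IsLieAbelian L := fun h => by
    obtain ⟨a, b, hab⟩ := hnonab
    exact hab (h.trivial a b)
  obtain ⟨f, g, hfx, hfy, hgx, hgy, hf, hg, hdec⟩ :=
    LieAlgebra.exists_dual_pair_mod_lowerCentralSeries hL hgen
  obtain ⟨ξ, hξ⟩ := LieAlgebra.exists_dual_lie_eq hL hdec
  obtain ⟨u, hucent, hunc⟩ :=
    SetLike.exists_of_lt (LieModule.maxTrivSubmodule_lt_normalizer (R := F) hL)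
  obtain ⟨T, hT, a, b, hab⟩ := LieAlgebra.exists_isLocalAutomorphism_of_mem_normalizer_center
    hfx hfy hgx hgy hf hg hξ hdec hucent hunc
  exact ⟨T, hT, fun h => hab (h.2 a b)⟩
end
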